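/- arXiv:2307.06685 — 5 statements merged into one kernel-verified Lean document; each statement's English description precedes it below -/
import Mathlib

section
/- Let q ≥ 2 and m ≥ 1 be integers and let X be a random variable with values in [0,1) having a probability density function f. Suppose there are constants c_0, …, c_{q^m−1} such that f = c_j Lebesgue-almost everywhere on the interval [j·q^{−m}, (j+1)·q^{−m}) for each j = 0, 1, …, q^m − 1. Then for every n ≥ m, the random variable T^n(X) is uniformly distributed on [0,1). -/
open MeasureTheory Set

/-! For `x ∈ [0,1)` we have `T^n x = fract (q^n x)`, and on each cell `[j/q^n, (j+1)/q^n)` the map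
`x ↦ fract (q^n x)` is affine onto `[0,1)`, so it pushes Lebesgue measure on the cell to `q^{-n}`
times the uniform distribution. As `n ≥ m`, every such cell lies in a cell of mesh `q^{-m}`, where
the density of `X` is a.e. constant; hence the law of `T^n X` is a constant multiple of the uniform
distribution, and the constant is `1` because both are probability measures. -/

/-- The base-`q` map `T(x) = q·x − ⌊q·x⌋`. -/
noncomputable def T (q : ℕ) : ℝ → ℝ := fun x => Int.fract ((q : ℝ) * x)

lemma Int.fract_natCast_mul_fract (a : ℕ) (y : ℝ) :
    Int.fract ((a : ℝ) * Int.fract y) = Int.fract ((a : ℝ) * y) := by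
  have h : (a : ℝ) * Int.fract y = (a : ℝ) * y - ((a * ⌊y⌋ : ℤ) : ℝ) := by
    rw [Int.fract]; push_cast; ring
  rw [h, Int.fract_sub_intCast]

lemma T_iterate_fract (q n : ℕ) (x : ℝ) :
    (T q)^[n] (Int.fract x) = Int.fract ((q : ℝ) ^ n * x) := by
  induction n generalizing x with
  | zero => simp
  | succ n ih =>
    rw [Function.iterate_succ_apply, T, Int.fract_natCast_mul_fract, ← Int.fract_fract, ih,
      ← Nat.cast_pow, Int.fract_natCast_mul_fract, Nat.cast_pow, ← mul_assoc, ← pow_succ]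

lemma T_iterate_of_mem_Ico (q n : ℕ) {x : ℝ} (hx : x ∈ Ico (0 : ℝ) 1) :
    (T q)^[n] x = Int.fract (((q ^ n : ℕ) : ℝ) * x) := by
  simpa [Int.fract_eq_self.mpr hx] using T_iterate_fract q n x

def gridCell (N : ℝ) (j : ℕ) : Set ℝ := Ico (j / N) ((j + 1) / N)

section gridCell

variable {N : ℝ} {j : ℕ} {x : ℝ}

lemma measurableSet_gridCell : MeasurableSet (gridCell N j) := measurableSet_Ico

lemma mem_gridCell_iff (hN : 0 < N) : x ∈ gridCell N j ↔ (j : ℝ) ≤ N * x ∧ N * x < j + 1 := by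
  rw [gridCell, mem_Ico, div_le_iff₀ hN, lt_div_iff₀ hN, mul_comm x]

lemma gridCell_mul_subset (hN : 0 < N) {d : ℕ} (hd : 0 < d) :
    gridCell (N * d) j ⊆ gridCell N (j / d) := by
  have hdR : (0 : ℝ) < d := by exact_mod_cast hd
  have hlo : ((j / d : ℕ) : ℝ) * d ≤ j := by exact_mod_cast Nat.div_mul_le_self j d
  have hhi : (j : ℝ) + 1 ≤ ((j / d : ℕ) + 1) * d := by
    exact_mod_cast (Nat.lt_div_mul_add (a := j) hd).trans_eq (by ring)
  intro x hx
  rw [mem_gridCell_iff (mul_pos hN hdR)] at hx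
  rw [mem_gridCell_iff hN]
  constructor <;> nlinarith

lemma gridCell_pow_subset {q m n : ℕ} (hq : 0 < q) (hmn : m ≤ n) (j : ℕ) :
    gridCell ((q ^ n : ℕ) : ℝ) j ⊆ gridCell ((q : ℝ) ^ m) (j / q ^ (n - m)) := by
  have hqn : ((q ^ n : ℕ) : ℝ) = (q : ℝ) ^ m * (q ^ (n - m) : ℕ) := by
    rw [Nat.cast_pow, Nat.cast_pow, ← pow_add, Nat.add_sub_cancel' hmn]
  exact hqn ▸ gridCell_mul_subset (by positivity) (by positivity)

lemma pairwise_disjoint_gridCell (hN : 0 < N) :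
    Pairwise (Function.onFun Disjoint (gridCell N)) := by
  intro i k hik
  refine Set.disjoint_left.mpr fun x hi hk => hik ?_
  rw [mem_gridCell_iff hN] at hi hk
  have hik : (i : ℝ) < k + 1 := hi.1.trans_lt hk.2
  have hki : (k : ℝ) < i + 1 := hk.1.trans_lt hi.2
  norm_cast at hik hki
  omega

lemma fract_mul_of_mem_gridCell (hN : 0 < N) (hx : x ∈ gridCell N j) :
    Int.fract (N * x) = N * x - j := by
  rw [mem_gridCell_iff hN] at hx
  rw [← Int.fract_sub_natCast, Int.fract_eq_self]
  constructor <;> linarith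

lemma biUnion_gridCell {N : ℕ} (hN : 0 < N) :
    ⋃ j ∈ Finset.range N, gridCell N j = Ico (0 : ℝ) 1 := by
  have hNR : (0 : ℝ) < N := by exact_mod_cast hN
  ext x
  simp only [mem_iUnion, Finset.mem_range, exists_prop, mem_gridCell_iff hNR, mem_Ico]
  constructor
  · rintro ⟨j, hjN, hjx, hxj⟩
    have hjN' : (j : ℝ) + 1 ≤ N := by exact_mod_cast hjN
    constructor <;> nlinarith
  · rintro ⟨hx0, hx1⟩
    have hNx : 0 ≤ (N : ℝ) * x := by positivity
    refine ⟨⌊(N : ℝ) * x⌋₊, (Nat.floor_lt hNx).mpr (by nlinarith), Nat.floor_le hNx,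
      Nat.lt_floor_add_one _⟩

lemma map_fract_mul_restrict_gridCell (hN : 0 < N) (j : ℕ) :
    (volume.restrict (gridCell N j)).map (fun x => Int.fract (N * x))
      = ENNReal.ofReal N⁻¹ • volume.restrict (Ico (0 : ℝ) 1) := by
  have hfract : (fun x => Int.fract (N * x)) =ᵐ[volume.restrict (gridCell N j)]
      fun x => N * x - j := by
    filter_upwards [self_mem_ae_restrict measurableSet_gridCell] with x hx
    exact fract_mul_of_mem_gridCell hN hx
  have hpre : (fun x => N * x - j) ⁻¹' Ico (0 : ℝ) 1 = gridCell N j := by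
    ext x
    rw [mem_gridCell_iff hN, mem_preimage, mem_Ico, sub_nonneg, sub_lt_iff_lt_add']
  have haffine : (fun x => N * x - j) = (· + -(j : ℝ)) ∘ (N * ·) := by
    ext x; simp [sub_eq_add_neg]
  rw [Measure.map_congr hfract, ← hpre,
    ← Measure.restrict_map (by fun_prop) measurableSet_Ico, haffine,
    ← Measure.map_map (measurable_add_const _) (measurable_const_mul _),
    Real.map_volume_mul_left hN.ne', Measure.map_smul, map_add_right_eq_self,
    abs_of_pos (inv_pos.mpr hN), Measure.restrict_smul]

end gridCell

lemma map_fract_mul_eq_smul_of_restrict_gridCell {μ : Measure ℝ}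
    (hμ : ∀ᵐ x ∂μ, x ∈ Ico (0 : ℝ) 1) {N : ℕ} (hN : 0 < N) (a : ℕ → ENNReal)
    (ha : ∀ j < N, μ.restrict (gridCell N j) = a j • volume.restrict (gridCell N j)) :
    μ.map (fun x => Int.fract ((N : ℝ) * x))
      = (∑ j ∈ Finset.range N, a j * ENNReal.ofReal (N : ℝ)⁻¹) •
          volume.restrict (Ico (0 : ℝ) 1) := by
  have hNR : (0 : ℝ) < N := by exact_mod_cast hN
  have hdecomp : μ = ∑ j ∈ Finset.range N, a j • volume.restrict (gridCell N j) := by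
    rw [← Measure.restrict_eq_self_of_ae_mem hμ, ← biUnion_gridCell hN,
      Measure.restrict_biUnion_finset ((pairwise_disjoint_gridCell hNR).set_pairwise _)
        fun _ => measurableSet_gridCell,
      Measure.sum_coe_finset (Finset.range N) fun j => μ.restrict (gridCell N j)]
    exact Finset.sum_congr rfl fun j hj => ha j (Finset.mem_range.mp hj)
  rw [hdecomp, Measure.map_finset_sum (by fun_prop), Finset.sum_smul]
  refine Finset.sum_congr rfl fun j _ => ?_
  rw [Measure.map_smul, map_fract_mul_restrict_gridCell hNR, smul_smul]

lemma restrict_withDensity_eq_smul_of_ae_eq {α : Type*} [MeasurableSpace α] {μ : Measure α}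
    {s : Set α} (hs : MeasurableSet s) {f : α → ENNReal} {a : ENNReal}
    (hf : ∀ᵐ x ∂μ.restrict s, f x = a) :
    (μ.withDensity f).restrict s = a • μ.restrict s := by
  rw [restrict_withDensity hs, withDensity_congr_ae hf, withDensity_const]

lemma MeasureTheory.Measure.eq_of_eq_smul {α : Type*} [MeasurableSpace α] {μ ν : Measure α}
    [IsProbabilityMeasure μ] [IsProbabilityMeasure ν] {a : ENNReal} (h : ν = a • μ) : ν = μ := by
  have ha : a = 1 := by simpa using (congrArg (· univ) h).symm
  rw [h, ha, one_smul]

theorem stmt2_general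
    {Ω : Type*} [MeasurableSpace Ω] (ℙ : Measure Ω) [IsProbabilityMeasure ℙ]
    (q : ℕ) (hq : 2 ≤ q) (m : ℕ)
    (f : ℝ → ℝ)
    (X : Ω → ℝ) (hX : Measurable X) (hXrange : ∀ ω, X ω ∈ Set.Ico (0:ℝ) 1)
    (hlaw : Measure.map X ℙ = volume.withDensity (fun x => ENNReal.ofReal (f x)))
    -- `f` is a.e. constant `c j` on each interval `[j·q^{-m}, (j+1)·q^{-m})`
    (c : ℕ → ℝ)
    (hconst : ∀ j < q ^ m,
      ∀ᵐ x ∂(volume.restrict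
        (Set.Ico ((j : ℝ) / (q : ℝ) ^ m) (((j : ℝ) + 1) / (q : ℝ) ^ m))), f x = c j)
    (n : ℕ) (hn : m ≤ n) :
    Measure.map (fun ω => (T q)^[n] (X ω)) ℙ = volume.restrict (Set.Ico (0:ℝ) 1) := by
  have hq0 : 0 < q := by omega
  have hcell : ∀ j < q ^ n, (Measure.map X ℙ).restrict (gridCell (q ^ n : ℕ) j)
      = ENNReal.ofReal (c (j / q ^ (n - m))) • volume.restrict (gridCell (q ^ n : ℕ) j) := by
    intro j hj
    have hk : j / q ^ (n - m) < q ^ m := by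
      rwa [Nat.div_lt_iff_lt_mul (by positivity), ← pow_add, Nat.add_sub_cancel' hn]
    rw [hlaw]
    refine restrict_withDensity_eq_smul_of_ae_eq measurableSet_gridCell ?_
    filter_upwards [ae_restrict_of_ae_restrict_of_subset (gridCell_pow_subset hq0 hn j)
      (hconst _ hk)] with x hx
    rw [hx]
  have hXae : ∀ᵐ x ∂(Measure.map X ℙ), x ∈ Ico (0 : ℝ) 1 :=
    (ae_map_iff hX.aemeasurable measurableSet_Ico).mpr (.of_forall hXrange)
  have hiterate :
      (fun ω => (T q)^[n] (X ω)) = (fun x => Int.fract (((q ^ n : ℕ) : ℝ) * x)) ∘ X :=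
    funext fun ω => T_iterate_of_mem_Ico q n (hXrange ω)
  have : IsProbabilityMeasure (Measure.map X ℙ) :=
    Measure.isProbabilityMeasure_map hX.aemeasurable
  have : IsProbabilityMeasure
      ((Measure.map X ℙ).map fun x => Int.fract (((q ^ n : ℕ) : ℝ) * x)) :=
    Measure.isProbabilityMeasure_map (by fun_prop)
  have : IsProbabilityMeasure (volume.restrict (Ico (0 : ℝ) 1)) := ⟨by simp⟩
  rw [hiterate, ← Measure.map_map (by fun_prop) hX]
  exact Measure.eq_of_eq_smul
    (map_fract_mul_eq_smul_of_restrict_gridCell hXae (by positivity) _ hcell)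

theorem stmt2
    {Ω : Type*} [MeasurableSpace Ω] (ℙ : Measure Ω) [IsProbabilityMeasure ℙ]
    (q : ℕ) (hq : 2 ≤ q) (m : ℕ) (hm : 1 ≤ m)
    (f : ℝ → ℝ) (hf_meas : Measurable f) (hf_nonneg : ∀ x, 0 ≤ f x)
    (hf_supp : ∀ x, x ∉ Set.Ico (0:ℝ) 1 → f x = 0)
    (X : Ω → ℝ) (hX : Measurable X) (hXrange : ∀ ω, X ω ∈ Set.Ico (0:ℝ) 1)
    (hlaw : Measure.map X ℙ = volume.withDensity (fun x => ENNReal.ofReal (f x)))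
    -- `f` is a.e. constant `c j` on each interval `[j·q^{-m}, (j+1)·q^{-m})`
    (c : ℕ → ℝ)
    (hconst : ∀ j < q ^ m,
      ∀ᵐ x ∂(volume.restrict
        (Set.Ico ((j : ℝ) / (q : ℝ) ^ m) (((j : ℝ) + 1) / (q : ℝ) ^ m))), f x = c j)
    (n : ℕ) (hn : m ≤ n) :
    Measure.map (fun ω => (T q)^[n] (X ω)) ℙ = volume.restrict (Set.Ico (0:ℝ) 1) :=
  stmt2_general ℙ q hq m f X hX hXrange hlaw c hconst n hn
end

section
/- Let q ≥ 2 be an integer and let f be a probability density function on [0,1) that is lower semi-continuous at Lebesgue-almost every point of [0,1). Then there exists a probability space carrying a random variable Y with values in [0,1) whose law has density f, and a random variable N with values in the non-negative integers, such that T^N(Y) is uniformly distributed on [0,1) and independent of (N, ⌊q^N Y⌋), and moreover for every n ≥ 0 and every Borel set A ⊆ [0,1): P(N ≤ n and Y ∈ A) = Σ_{k=0}^n Σ_{j=1}^{q^k} c_{j;k} · μ(A ∩ I_{j;k}), where μ is Lebesgue measure. -/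
open MeasureTheory Set

/-- The interval `I_{k;n} = [(k−1)q^{−n}, k·q^{−n})`. -/
noncomputable def Ikn (q n k : ℕ) : Set ℝ :=
  Set.Ico (((k : ℝ) - 1) / (q : ℝ) ^ n) ((k : ℝ) / (q : ℝ) ^ n)

/-- The constants `c_{k;n}`: `c_{1;0} = inf_{[0,1)} f` and, for `n ≥ 1`,
`c_{k;n} = inf_{I_{k;n}} f − inf_{I_{⌈k/q⌉;n−1}} f` (noting `⌈k/q⌉ = (k+q−1)/q`
in natural division). -/
noncomputable def ckn (f : ℝ → ℝ) (q k n : ℕ) : ℝ :=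
  if n = 0 then sInf (f '' Ikn q 0 1)
  else sInf (f '' Ikn q n k) - sInf (f '' Ikn q (n - 1) ((k + q - 1) / q))

/-!
Each `c_{j;k}` is the increment of the infimum of `f` from a cell to one of its children, so
`c_{j;k} ≥ 0` and, summed along the cells containing `x`, the `c`'s telescope to the infimum of
`f` over the level-`n` cell of `x`. As the cells shrink to `x`, lower semicontinuity makes these
infima increase to `f x`; hence `f = ∑_{k,j} c_{j;k} 𝟙_{I_{j;k}}` almost everywhere, and the
masses `c_{j;k} μ(I_{j;k})` add up to `∫ f = 1`. Draw a cell `(N, j)` with these probabilities and,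
independently, `U` uniform on `[0,1)`, and put `Y = (j - 1 + U) / q^N`, the point of `I_{j;N}` with
relative position `U`. Then `T^N Y = U` and `⌊q^N Y⌋ = j - 1`, which gives uniformity and
independence, while `P(N = k, Y ∈ A) = ∑_j c_{j;k} μ(A ∩ I_{j;k})` gives both the law of `Y` and
the joint law.
-/

open scoped ENNReal Topology
open Filter

section Cells

variable {q : ℕ}

noncomputable def cellIndex (q n : ℕ) (x : ℝ) : ℕ := ⌊x * (q : ℝ) ^ n⌋₊ + 1

lemma mem_Ikn_iff (hq : 0 < q) {x : ℝ} (hx : 0 ≤ x) {n j : ℕ} (hj : 1 ≤ j) :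
    x ∈ Ikn q n j ↔ j = cellIndex q n x := by
  have hpos : (0 : ℝ) < (q : ℝ) ^ n := by positivity
  obtain ⟨m, rfl⟩ : ∃ m, j = m + 1 := ⟨j - 1, by omega⟩
  rw [Ikn, mem_Ico, div_le_iff₀ hpos, lt_div_iff₀ hpos, cellIndex, add_left_inj, eq_comm,
    Nat.floor_eq_iff (by positivity)]
  push_cast
  constructor <;> rintro ⟨h₁, h₂⟩ <;> constructor <;> linarith

lemma one_le_cellIndex (n : ℕ) (x : ℝ) : 1 ≤ cellIndex q n x := Nat.le_add_left _ _

lemma mem_Ikn_cellIndex (hq : 0 < q) {x : ℝ} (hx : 0 ≤ x) (n : ℕ) :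
    x ∈ Ikn q n (cellIndex q n x) :=
  (mem_Ikn_iff hq hx (one_le_cellIndex n x)).2 rfl

lemma cellIndex_le_pow (hq : 0 < q) {x : ℝ} (hx : x ∈ Ico (0 : ℝ) 1) (n : ℕ) :
    cellIndex q n x ≤ q ^ n := by
  have hpos : (0 : ℝ) < (q : ℝ) ^ n := by positivity
  rw [cellIndex, Nat.add_one_le_iff, Nat.floor_lt (mul_nonneg hx.1 hpos.le)]
  push_cast
  exact mul_lt_of_lt_one_left hpos hx.2

lemma cellIndex_zero {x : ℝ} (hx : x ∈ Ico (0 : ℝ) 1) : cellIndex q 0 x = 1 := by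
  simp [cellIndex, Nat.floor_eq_zero.2 hx.2]

lemma cellIndex_parent (hq : 0 < q) (x : ℝ) (n : ℕ) :
    (cellIndex q (n + 1) x + q - 1) / q = cellIndex q n x := by
  have hq' : (q : ℝ) ≠ 0 := by positivity
  have hfloor : ⌊x * (q : ℝ) ^ (n + 1)⌋₊ / q = ⌊x * (q : ℝ) ^ n⌋₊ := by
    rw [← Nat.floor_div_natCast, pow_succ, ← mul_assoc, mul_div_cancel_right₀ _ hq']
  rw [cellIndex, cellIndex, Nat.add_right_comm, Nat.add_sub_cancel,
    Nat.add_div_right _ hq, hfloor]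

lemma Ikn_succ_subset (hq : 0 < q) {n j : ℕ} (hj : 1 ≤ j) :
    Ikn q (n + 1) j ⊆ Ikn q n ((j + q - 1) / q) := by
  intro z hz
  have hz₀ : 0 ≤ z := le_trans (div_nonneg (by simpa using hj) (by positivity)) hz.1
  rw [(mem_Ikn_iff hq hz₀ hj).1 hz, cellIndex_parent hq]
  exact mem_Ikn_cellIndex hq hz₀ n

lemma Ikn_subset_Ico (hq : 0 < q) {k j : ℕ} (hj₁ : 1 ≤ j) (hj₂ : j ≤ q ^ k) :
    Ikn q k j ⊆ Ico (0 : ℝ) 1 := by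
  have hpos : (0 : ℝ) < (q : ℝ) ^ k := by positivity
  rintro x ⟨h₁, h₂⟩
  refine ⟨le_trans (div_nonneg (by simpa using hj₁) hpos.le) h₁, h₂.trans_le ?_⟩
  rw [div_le_one hpos]
  exact_mod_cast hj₂

lemma Ikn_cellIndex_subset_ball (hq : 0 < q) {x : ℝ} (hx : 0 ≤ x) (n : ℕ) :
    Ikn q n (cellIndex q n x) ⊆ Metric.ball x ((q : ℝ) ^ n)⁻¹ := by
  have hpos : (0 : ℝ) < (q : ℝ) ^ n := by positivity
  obtain ⟨hx₁, hx₂⟩ := mem_Ikn_cellIndex hq hx n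
  have hlen : (cellIndex q n x : ℝ) / (q : ℝ) ^ n
      = ((cellIndex q n x : ℝ) - 1) / (q : ℝ) ^ n + ((q : ℝ) ^ n)⁻¹ := by
    field_simp
    ring
  rintro z ⟨hz₁, hz₂⟩
  rw [Metric.mem_ball, Real.dist_eq, abs_sub_lt_iff]
  constructor <;> linarith

lemma Ikn_nonempty (hq : 0 < q) (n k : ℕ) : (Ikn q n k).Nonempty := by
  have hpos : (0 : ℝ) < (q : ℝ) ^ n := by positivity
  rw [Ikn, nonempty_Ico]
  gcongr
  linarith

lemma measurableSet_Ikn (q n k : ℕ) : MeasurableSet (Ikn q n k) := measurableSet_Ico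

lemma volume_Ikn (hq : 0 < q) (k j : ℕ) :
    volume (Ikn q k j) = ENNReal.ofReal ((q : ℝ) ^ k)⁻¹ := by
  have hpos : (0 : ℝ) < (q : ℝ) ^ k := by positivity
  rw [Ikn, Real.volume_Ico]
  congr 1
  field_simp
  ring

end Cells

section Telescoping

variable {q : ℕ} {f : ℝ → ℝ}

lemma ckn_nonneg (hq : 0 < q) (hf : ∀ x, 0 ≤ f x) {j : ℕ} (hj : 1 ≤ j) (n : ℕ) :
    0 ≤ ckn f q j n := by
  have hbdd (s : Set ℝ) : BddBelow (f '' s) := ⟨0, by rintro _ ⟨x, -, rfl⟩; exact hf x⟩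
  rcases n with _ | n
  · exact Real.sInf_nonneg (by rintro _ ⟨x, -, rfl⟩; exact hf x)
  · rw [ckn, if_neg n.succ_ne_zero, Nat.add_sub_cancel, sub_nonneg]
    exact csInf_le_csInf (hbdd _) ((Ikn_nonempty hq _ _).image f)
      (image_mono (Ikn_succ_subset hq hj))

noncomputable def cellInf (f : ℝ → ℝ) (q n : ℕ) (x : ℝ) : ℝ :=
  sInf (f '' Ikn q n (cellIndex q n x))

lemma sum_ckn_cellIndex (hq : 0 < q) {x : ℝ} (hx : x ∈ Ico (0 : ℝ) 1) (n : ℕ) :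
    ∑ k ∈ Finset.range (n + 1), ckn f q (cellIndex q k x) k = cellInf f q n x := by
  induction n with
  | zero => simp [ckn, cellInf, cellIndex_zero hx]
  | succ n ih =>
    rw [Finset.sum_range_succ, ih, ckn, if_neg n.succ_ne_zero, Nat.add_sub_cancel,
      cellIndex_parent hq, cellInf, cellInf]
    ring

lemma cellInf_le (hq : 0 < q) (hf : BddBelow (range f)) {x : ℝ} (hx : 0 ≤ x) (n : ℕ) :
    cellInf f q n x ≤ f x :=
  csInf_le (hf.mono (image_subset_range _ _)) ⟨x, mem_Ikn_cellIndex hq hx n, rfl⟩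

lemma tendsto_cellInf (hq : 1 < q) (hf : BddBelow (range f)) {x : ℝ} (hx : 0 ≤ x)
    (hlsc : LowerSemicontinuousAt f x) :
    Tendsto (fun n => cellInf f q n x) atTop (𝓝 (f x)) := by
  have hq₀ : 0 < q := by omega
  refine tendsto_order.2 ⟨fun y hy => ?_, fun y hy =>
    Eventually.of_forall fun n => (cellInf_le hq₀ hf hx n).trans_lt hy⟩
  obtain ⟨y', hyy', hy'⟩ := exists_between hy
  obtain ⟨δ, hδ, hball⟩ := Metric.eventually_nhds_iff_ball.1 (hlsc y' hy')
  have hdiam : Tendsto (fun n : ℕ => ((q : ℝ) ^ n)⁻¹) atTop (𝓝 0) :=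
    tendsto_inv_atTop_zero.comp (tendsto_pow_atTop_atTop_of_one_lt (by exact_mod_cast hq))
  filter_upwards [hdiam.eventually (gt_mem_nhds hδ)] with n hn
  refine hyy'.trans_le (le_csInf ((Ikn_nonempty hq₀ _ _).image f) ?_)
  rintro _ ⟨z, hz, rfl⟩
  exact (hball z (Metric.ball_subset_ball hn.le (Ikn_cellIndex_subset_ball hq₀ hx n hz))).le

lemma hasSum_ckn_cellIndex (hq : 1 < q) (hf : ∀ x, 0 ≤ f x) {x : ℝ} (hx : x ∈ Ico (0 : ℝ) 1)
    (hlsc : LowerSemicontinuousAt f x) :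
    HasSum (fun k => ckn f q (cellIndex q k x) k) (f x) := by
  have hq₀ : 0 < q := by omega
  rw [hasSum_iff_tendsto_nat_of_nonneg (fun k => ckn_nonneg hq₀ hf (one_le_cellIndex k x) k),
    ← tendsto_add_atTop_iff_nat 1]
  simp_rw [sum_ckn_cellIndex hq₀ hx]
  exact tendsto_cellInf hq ⟨0, by rintro _ ⟨x, rfl⟩; exact hf x⟩ hx.1 hlsc

end Telescoping

section Density

variable {q : ℕ} {f : ℝ → ℝ}

lemma tsum_sum_ckn_mul_indicator (hq : 1 < q) (hf : ∀ x, 0 ≤ f x)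
    (hsupp : ∀ x, x ∉ Ico (0 : ℝ) 1 → f x = 0) {x : ℝ}
    (hlsc : x ∈ Ico (0 : ℝ) 1 → LowerSemicontinuousAt f x) :
    ∑' k, ∑ j ∈ Finset.Icc 1 (q ^ k), ENNReal.ofReal (ckn f q j k) * (Ikn q k j).indicator 1 x
      = ENNReal.ofReal (f x) := by
  have hq₀ : 0 < q := by omega
  by_cases hx : x ∈ Ico (0 : ℝ) 1
  · have hcell (k : ℕ) : ∑ j ∈ Finset.Icc 1 (q ^ k),
        ENNReal.ofReal (ckn f q j k) * (Ikn q k j).indicator 1 x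
          = ENNReal.ofReal (ckn f q (cellIndex q k x) k) := by
      rw [Finset.sum_eq_single_of_mem (cellIndex q k x)
        (Finset.mem_Icc.2 ⟨one_le_cellIndex k x, cellIndex_le_pow hq₀ hx k⟩)]
      · simp [mem_Ikn_cellIndex hq₀ hx.1]
      · intro j hj hne
        have hx' : x ∉ Ikn q k j := fun h =>
          hne ((mem_Ikn_iff hq₀ hx.1 (Finset.mem_Icc.1 hj).1).1 h)
        simp [hx']
    have hsum := hasSum_ckn_cellIndex hq hf hx (hlsc hx)
    simp_rw [hcell, ← ENNReal.ofReal_tsum_of_nonneg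
      (fun k => ckn_nonneg hq₀ hf (one_le_cellIndex k x) k) hsum.summable, hsum.tsum_eq]
  · rw [hsupp x hx, ENNReal.ofReal_zero, ENNReal.tsum_eq_zero]
    intro k
    refine Finset.sum_eq_zero fun j hj => ?_
    obtain ⟨hj₁, hj₂⟩ := Finset.mem_Icc.1 hj
    rw [indicator_of_notMem fun h => hx (Ikn_subset_Ico hq₀ hj₁ hj₂ h), mul_zero]

lemma tsum_sum_ckn_mul_volume (hq : 1 < q) (hf : ∀ x, 0 ≤ f x)
    (hsupp : ∀ x, x ∉ Ico (0 : ℝ) 1 → f x = 0)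
    (hlsc : ∀ᵐ x, x ∈ Ico (0 : ℝ) 1 → LowerSemicontinuousAt f x) (A : Set ℝ) :
    ∑' k, ∑ j ∈ Finset.Icc 1 (q ^ k), ENNReal.ofReal (ckn f q j k) * volume (A ∩ Ikn q k j)
      = ∫⁻ x in A, ENNReal.ofReal (f x) := by
  have hmeas (k j : ℕ) : Measurable ((Ikn q k j).indicator (1 : ℝ → ℝ≥0∞)) :=
    measurable_one.indicator (measurableSet_Ikn q k j)
  calc ∑' k, ∑ j ∈ Finset.Icc 1 (q ^ k), ENNReal.ofReal (ckn f q j k) * volume (A ∩ Ikn q k j)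
      = ∑' k, ∑ j ∈ Finset.Icc 1 (q ^ k),
          ∫⁻ x in A, ENNReal.ofReal (ckn f q j k) * (Ikn q k j).indicator 1 x := by
        simp_rw [lintegral_const_mul _ (hmeas _ _), lintegral_indicator_one (measurableSet_Ikn ..),
          Measure.restrict_apply (measurableSet_Ikn ..), inter_comm]
    _ = ∫⁻ x in A, ∑' k, ∑ j ∈ Finset.Icc 1 (q ^ k),
          ENNReal.ofReal (ckn f q j k) * (Ikn q k j).indicator 1 x := by
        rw [lintegral_tsum fun k => (Finset.measurable_sum _ fun j _ =>
          (hmeas k j).const_mul _).aemeasurable]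
        simp_rw [lintegral_finsetSum _ fun j _ => (hmeas _ j).const_mul _]
    _ = ∫⁻ x in A, ENNReal.ofReal (f x) :=
        lintegral_congr_ae (ae_restrict_of_ae (hlsc.mono fun x hx =>
          tsum_sum_ckn_mul_indicator hq hf hsupp hx))

end Density

section CellMap

variable {q : ℕ}

-- `p = (k, j)` stands for the cell `I_{j;k}`, and `cellMap q p` is the affine bijection
-- `[0,1) → I_{j;k}`.
noncomputable def cellMap (q : ℕ) (p : ℕ × ℕ) (u : ℝ) : ℝ := ((p.2 : ℝ) - 1 + u) / (q : ℝ) ^ p.1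

lemma pow_mul_cellMap (hq : 0 < q) (p : ℕ × ℕ) (u : ℝ) :
    (q : ℝ) ^ p.1 * cellMap q p u = ((p.2 - 1 : ℤ) : ℝ) + u := by
  rw [cellMap, mul_div_cancel₀ _ (by positivity)]
  push_cast
  ring

lemma T_iterate_eq_fract (q k : ℕ) {x : ℝ} (hx : x ∈ Ico (0 : ℝ) 1) :
    (T q)^[k] x = Int.fract ((q : ℝ) ^ k * x) := by
  induction k with
  | zero => simp [Int.fract_eq_self.2 hx]
  | succ k ih =>
    have hshift : (q : ℝ) * Int.fract ((q : ℝ) ^ k * x)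
        = (q : ℝ) ^ (k + 1) * x - ((q * ⌊(q : ℝ) ^ k * x⌋ : ℤ) : ℝ) := by
      rw [Int.fract]
      push_cast
      ring
    rw [Function.iterate_succ_apply', ih, T, hshift, Int.fract_sub_intCast]

lemma floor_pow_mul_cellMap (hq : 0 < q) (p : ℕ × ℕ) {u : ℝ} (hu : u ∈ Ico (0 : ℝ) 1) :
    ⌊(q : ℝ) ^ p.1 * cellMap q p u⌋ = (p.2 : ℤ) - 1 := by
  rw [pow_mul_cellMap hq, Int.floor_intCast_add, Int.floor_eq_zero_iff.2 hu, add_zero]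

lemma measurable_cellMap : Measurable fun ω : (ℕ × ℕ) × ℝ => cellMap q ω.1 ω.2 :=
  measurable_from_prod_countable_right fun p => by unfold cellMap; fun_prop

lemma cellMap_preimage_Ikn (hq : 0 < q) (p : ℕ × ℕ) : cellMap q p ⁻¹' Ikn q p.1 p.2 = Ico 0 1 := by
  have hpos : (0 : ℝ) < (q : ℝ) ^ p.1 := by positivity
  ext u
  simp only [cellMap, Ikn, mem_preimage, mem_Ico, div_le_div_iff_of_pos_right hpos,
    div_lt_div_iff_of_pos_right hpos]
  constructor <;> rintro ⟨h₁, h₂⟩ <;> constructor <;> linarith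

lemma volume_cellMap_preimage (hq : 0 < q) (p : ℕ × ℕ) (A : Set ℝ) :
    volume (cellMap q p ⁻¹' A) = ENNReal.ofReal ((q : ℝ) ^ p.1) * volume A := by
  have hpos : (0 : ℝ) < (q : ℝ) ^ p.1 := by positivity
  have hcomp : cellMap q p = (fun v => v * ((q : ℝ) ^ p.1)⁻¹) ∘ (fun u => ((p.2 : ℝ) - 1) + u) := by
    funext u
    simp [cellMap, div_eq_mul_inv]
  rw [hcomp, preimage_comp, measure_preimage_add, Real.volume_preimage_mul_right (by positivity),
    inv_inv, abs_of_pos hpos]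

lemma T_iterate_cellMap (hq : 0 < q) {p : ℕ × ℕ} (hp : p.2 ∈ Finset.Icc 1 (q ^ p.1)) {u : ℝ}
    (hu : u ∈ Ico (0 : ℝ) 1) : (T q)^[p.1] (cellMap q p u) = u := by
  have hmem : cellMap q p u ∈ Ikn q p.1 p.2 := by
    rwa [← mem_preimage, cellMap_preimage_Ikn hq]
  obtain ⟨hp₁, hp₂⟩ := Finset.mem_Icc.1 hp
  rw [T_iterate_eq_fract q p.1 (Ikn_subset_Ico hq hp₁ hp₂ hmem), pow_mul_cellMap hq,
    Int.fract_intCast_add, Int.fract_eq_self.2 hu]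

lemma volume_Ikn_mul_restrict_cellMap_preimage (hq : 0 < q) (p : ℕ × ℕ) (A : Set ℝ) :
    volume (Ikn q p.1 p.2) * volume.restrict (Ico (0 : ℝ) 1) (cellMap q p ⁻¹' A)
      = volume (A ∩ Ikn q p.1 p.2) := by
  have hpos : (0 : ℝ) < (q : ℝ) ^ p.1 := by positivity
  rw [Measure.restrict_apply' measurableSet_Ico, ← cellMap_preimage_Ikn hq, ← preimage_inter,
    volume_cellMap_preimage hq, volume_Ikn hq, ← mul_assoc, ← ENNReal.ofReal_mul (by positivity),
    inv_mul_cancel₀ hpos.ne', ENNReal.ofReal_one, one_mul]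

end CellMap

instance : IsProbabilityMeasure (volume.restrict (Ico (0 : ℝ) 1)) :=
  ⟨by rw [Measure.restrict_apply_univ, Real.volume_Ico, sub_zero, ENNReal.ofReal_one]⟩

section Coupling

variable {q : ℕ} (ν : Measure (ℕ × ℕ))

lemma ae_T_iterate_cellMap_eq (hq : 0 < q) (hν : ∀ᵐ p ∂ν, p.2 ∈ Finset.Icc 1 (q ^ p.1)) :
    (fun ω : (ℕ × ℕ) × ℝ => (T q)^[ω.1.1] (cellMap q ω.1 ω.2))
      =ᵐ[ν.prod (volume.restrict (Ico (0 : ℝ) 1))] Prod.snd := by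
  filter_upwards [Measure.quasiMeasurePreserving_fst.ae hν,
    Measure.quasiMeasurePreserving_snd.ae (ae_restrict_mem measurableSet_Ico)] with ω hp hu
  exact T_iterate_cellMap hq hp hu

lemma map_T_iterate_cellMap [IsProbabilityMeasure ν] (hq : 0 < q)
    (hν : ∀ᵐ p ∂ν, p.2 ∈ Finset.Icc 1 (q ^ p.1)) :
    (ν.prod (volume.restrict (Ico (0 : ℝ) 1))).map
        (fun ω => (T q)^[ω.1.1] (cellMap q ω.1 ω.2))
      = volume.restrict (Ico (0 : ℝ) 1) := by
  rw [Measure.map_congr (ae_T_iterate_cellMap_eq ν hq hν), Measure.map_snd_prod, measure_univ,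
    one_smul]

lemma indepFun_T_iterate_cellMap [IsProbabilityMeasure ν] (hq : 0 < q)
    (hν : ∀ᵐ p ∂ν, p.2 ∈ Finset.Icc 1 (q ^ p.1)) :
    ProbabilityTheory.IndepFun (fun ω => (T q)^[ω.1.1] (cellMap q ω.1 ω.2))
      (fun ω => (ω.1.1, ⌊(q : ℝ) ^ ω.1.1 * cellMap q ω.1 ω.2⌋))
      (ν.prod (volume.restrict (Ico (0 : ℝ) 1))) := by
  have hfloor : (fun ω : (ℕ × ℕ) × ℝ => (ω.1.1, (ω.1.2 : ℤ) - 1))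
      =ᵐ[ν.prod (volume.restrict (Ico (0 : ℝ) 1))]
        fun ω => (ω.1.1, ⌊(q : ℝ) ^ ω.1.1 * cellMap q ω.1 ω.2⌋) := by
    filter_upwards [Measure.quasiMeasurePreserving_snd.ae (ae_restrict_mem measurableSet_Ico)]
      with ω hu
    rw [floor_pow_mul_cellMap hq ω.1 hu]
  exact (ProbabilityTheory.indepFun_prod (X := fun p : ℕ × ℕ => (p.1, (p.2 : ℤ) - 1))
    (Y := id) (measurable_of_countable _) measurable_id).symm.congr
      (ae_T_iterate_cellMap_eq ν hq hν).symm hfloor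

end Coupling

section CellMeasure

variable {q : ℕ} {f : ℝ → ℝ}

noncomputable def cellMeasure (f : ℝ → ℝ) (q : ℕ) : Measure (ℕ × ℕ) :=
  Measure.sum fun k => ∑ j ∈ Finset.Icc 1 (q ^ k),
    (ENNReal.ofReal (ckn f q j k) * volume (Ikn q k j)) • Measure.dirac (k, j)

lemma lintegral_cellMeasure (g : ℕ × ℕ → ℝ≥0∞) :
    ∫⁻ p, g p ∂cellMeasure f q
      = ∑' k, ∑ j ∈ Finset.Icc 1 (q ^ k),
          ENNReal.ofReal (ckn f q j k) * volume (Ikn q k j) * g (k, j) := by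
  simp [cellMeasure, lintegral_sum_measure, lintegral_finsetSum_measure, lintegral_smul_measure]

lemma ae_cellMeasure : ∀ᵐ p ∂cellMeasure f q, p.2 ∈ Finset.Icc 1 (q ^ p.1) := by
  rw [ae_iff, cellMeasure, Measure.sum_apply _ MeasurableSet.of_discrete,
    ENNReal.tsum_eq_zero]
  intro k
  rw [Measure.coe_finsetSum, Finset.sum_apply]
  refine Finset.sum_eq_zero fun j hj => ?_
  obtain ⟨hj₁, hj₂⟩ := Finset.mem_Icc.1 hj
  simp [hj₁, hj₂]

lemma lintegral_ofReal_eq_one (hf : ∀ x, 0 ≤ f x) (hsupp : ∀ x, x ∉ Ico (0 : ℝ) 1 → f x = 0)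
    (hpdf : ∫ x in Ico (0 : ℝ) 1, f x = 1) :
    ∫⁻ x, ENNReal.ofReal (f x) = 1 := by
  have hint : Integrable f (volume.restrict (Ico (0 : ℝ) 1)) :=
    Integrable.of_integral_ne_zero (by rw [hpdf]; exact one_ne_zero)
  rw [← setLIntegral_eq_of_support_subset (s := Ico (0 : ℝ) 1) fun x hx => by
      by_contra h
      exact hx (by simp [hsupp x h]),
    ← ofReal_integral_eq_lintegral_ofReal hint (ae_of_all _ hf), hpdf, ENNReal.ofReal_one]

lemma isProbabilityMeasure_cellMeasure (hq : 1 < q) (hf : ∀ x, 0 ≤ f x)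
    (hsupp : ∀ x, x ∉ Ico (0 : ℝ) 1 → f x = 0) (hpdf : ∫ x in Ico (0 : ℝ) 1, f x = 1)
    (hlsc : ∀ᵐ x, x ∈ Ico (0 : ℝ) 1 → LowerSemicontinuousAt f x) :
    IsProbabilityMeasure (cellMeasure f q) := by
  have h := tsum_sum_ckn_mul_volume hq hf hsupp hlsc univ
  simp only [univ_inter, Measure.restrict_univ, lintegral_ofReal_eq_one hf hsupp hpdf] at h
  constructor
  rw [← lintegral_one, lintegral_cellMeasure]
  simpa using h

lemma prod_cellMeasure_apply (hq : 0 < q) (S : Set ℕ) {A : Set ℝ} (hA : MeasurableSet A) :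
    (cellMeasure f q).prod (volume.restrict (Ico (0 : ℝ) 1))
        ({ω | ω.1.1 ∈ S} ∩ (fun ω => cellMap q ω.1 ω.2) ⁻¹' A)
      = ∑' k, S.indicator (fun k => ∑ j ∈ Finset.Icc 1 (q ^ k),
          ENNReal.ofReal (ckn f q j k) * volume (A ∩ Ikn q k j)) k := by
  have hE : MeasurableSet ({ω : (ℕ × ℕ) × ℝ | ω.1.1 ∈ S} ∩ (fun ω => cellMap q ω.1 ω.2) ⁻¹' A) :=
    (measurable_fst.fst MeasurableSet.of_discrete).inter (measurable_cellMap hA)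
  rw [Measure.prod_apply hE, lintegral_cellMeasure]
  congr 1 with k
  by_cases hk : k ∈ S
  · simp only [indicator_of_mem hk]
    refine Finset.sum_congr rfl fun j _ => ?_
    rw [mul_assoc, ← volume_Ikn_mul_restrict_cellMap_preimage hq (k, j)]
    congr 3 with u
    simp [hk]
  · simp [hk]

end CellMeasure

section JointLaw

variable {q : ℕ} {f : ℝ → ℝ}

lemma prod_cellMeasure_le_inter_preimage (hq : 0 < q) (n : ℕ) {A : Set ℝ} (hA : MeasurableSet A) :
    (cellMeasure f q).prod (volume.restrict (Ico (0 : ℝ) 1))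
        ({ω | ω.1.1 ≤ n} ∩ (fun ω => cellMap q ω.1 ω.2) ⁻¹' A)
      = ∑ k ∈ Finset.range (n + 1), ∑ j ∈ Finset.Icc 1 (q ^ k),
          ENNReal.ofReal (ckn f q j k) * volume (A ∩ Ikn q k j) := by
  have hrange (k : ℕ) : k ∈ Finset.range (n + 1) ↔ k ∈ Iic n := by simp
  rw [show {ω : (ℕ × ℕ) × ℝ | ω.1.1 ≤ n} = {ω | ω.1.1 ∈ Iic n} from rfl,
    prod_cellMeasure_apply hq _ hA, tsum_eq_sum fun k hk => indicator_of_notMem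
      (mt (hrange k).2 hk) _]
  exact Finset.sum_congr rfl fun k hk => indicator_of_mem ((hrange k).1 hk) _

lemma toReal_sum_sum_ofReal_ckn_mul_volume (hq : 0 < q) (hf : ∀ x, 0 ≤ f x) (A : Set ℝ) (n : ℕ) :
    (∑ k ∈ Finset.range (n + 1), ∑ j ∈ Finset.Icc 1 (q ^ k),
        ENNReal.ofReal (ckn f q j k) * volume (A ∩ Ikn q k j)).toReal
      = ∑ k ∈ Finset.range (n + 1), ∑ j ∈ Finset.Icc 1 (q ^ k),
          ckn f q j k * (volume (A ∩ Ikn q k j)).toReal := by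
  have hfin (k j : ℕ) : ENNReal.ofReal (ckn f q j k) * volume (A ∩ Ikn q k j) ≠ ⊤ :=
    ENNReal.mul_ne_top ENNReal.ofReal_ne_top (measure_ne_top_of_subset inter_subset_right
      (by rw [volume_Ikn hq]; exact ENNReal.ofReal_ne_top))
  rw [ENNReal.toReal_sum fun k _ => ENNReal.sum_ne_top.2 fun j _ => hfin k j]
  refine Finset.sum_congr rfl fun k _ => ?_
  rw [ENNReal.toReal_sum fun j _ => hfin k j]
  refine Finset.sum_congr rfl fun j hj => ?_
  rw [ENNReal.toReal_mul, ENNReal.toReal_ofReal (ckn_nonneg hq hf (Finset.mem_Icc.1 hj).1 k)]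

end JointLaw

theorem stmt5_general
    (q : ℕ) (hq : 2 ≤ q)
    (f : ℝ → ℝ) (hf_nonneg : ∀ x, 0 ≤ f x)
    (hf_supp : ∀ x, x ∉ Set.Ico (0:ℝ) 1 → f x = 0)
    (hf_pdf : ∫ x in Set.Ico (0:ℝ) 1, f x = 1)
    -- `f` is lower semi-continuous at Lebesgue-almost every point of `[0,1)`
    (hf_lsc : ∀ᵐ x ∂(volume : Measure ℝ),
      x ∈ Set.Ico (0:ℝ) 1 → LowerSemicontinuousAt f x) :
    ∃ (Ω : Type) (_ : MeasurableSpace Ω) (ℙ : Measure Ω) (_ : IsProbabilityMeasure ℙ)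
      (Y : Ω → ℝ) (N : Ω → ℕ),
      Measurable Y ∧ Measurable N ∧
      -- the law of `Y` has density `f`
      Measure.map Y ℙ = volume.withDensity (fun x => ENNReal.ofReal (f x)) ∧
      -- `T^N(Y)` is uniformly distributed on `[0,1)`
      Measure.map (fun ω => (T q)^[N ω] (Y ω)) ℙ = volume.restrict (Set.Ico (0:ℝ) 1) ∧
      -- `T^N(Y)` is independent of `(N, ⌊q^N Y⌋)`
      ProbabilityTheory.IndepFun (fun ω => (T q)^[N ω] (Y ω))
        (fun ω => (N ω, ⌊(q : ℝ) ^ (N ω) * Y ω⌋)) ℙ ∧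
      -- joint law of `{N ≤ n}` and `Y`
      ∀ n : ℕ, ∀ A : Set ℝ, MeasurableSet A → A ⊆ Set.Ico (0:ℝ) 1 →
        (ℙ ({ω | N ω ≤ n} ∩ Y ⁻¹' A)).toReal
          = ∑ k ∈ Finset.range (n + 1), ∑ j ∈ Finset.Icc 1 (q ^ k),
              ckn f q j k * (volume (A ∩ Ikn q k j)).toReal := by
  have hq₀ : 0 < q := by omega
  have := isProbabilityMeasure_cellMeasure hq hf_nonneg hf_supp hf_pdf hf_lsc
  refine ⟨(ℕ × ℕ) × ℝ, inferInstance, (cellMeasure f q).prod (volume.restrict (Ico 0 1)),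
    inferInstance, fun ω => cellMap q ω.1 ω.2, fun ω => ω.1.1, measurable_cellMap,
    measurable_fst.fst, ?_, map_T_iterate_cellMap _ hq₀ ae_cellMeasure,
    indepFun_T_iterate_cellMap _ hq₀ ae_cellMeasure, fun n A hA _ => ?_⟩
  · ext A hA
    have hlaw := prod_cellMeasure_apply (f := f) hq₀ univ hA
    rw [Measure.map_apply measurable_cellMap hA, withDensity_apply _ hA,
      ← tsum_sum_ckn_mul_volume hq hf_nonneg hf_supp hf_lsc]
    simpa using hlaw
  · rw [prod_cellMeasure_le_inter_preimage hq₀ n hA,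
      toReal_sum_sum_ofReal_ckn_mul_volume hq₀ hf_nonneg]

theorem stmt5
    (q : ℕ) (hq : 2 ≤ q)
    (f : ℝ → ℝ) (hf_meas : Measurable f) (hf_nonneg : ∀ x, 0 ≤ f x)
    (hf_supp : ∀ x, x ∉ Set.Ico (0:ℝ) 1 → f x = 0)
    (hf_pdf : ∫ x in Set.Ico (0:ℝ) 1, f x = 1)
    -- `f` is lower semi-continuous at Lebesgue-almost every point of `[0,1)`
    (hf_lsc : ∀ᵐ x ∂(volume : Measure ℝ),
      x ∈ Set.Ico (0:ℝ) 1 → LowerSemicontinuousAt f x) :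
    ∃ (Ω : Type) (_ : MeasurableSpace Ω) (ℙ : Measure Ω) (_ : IsProbabilityMeasure ℙ)
      (Y : Ω → ℝ) (N : Ω → ℕ),
      Measurable Y ∧ Measurable N ∧
      -- the law of `Y` has density `f`
      Measure.map Y ℙ = volume.withDensity (fun x => ENNReal.ofReal (f x)) ∧
      -- `T^N(Y)` is uniformly distributed on `[0,1)`
      Measure.map (fun ω => (T q)^[N ω] (Y ω)) ℙ = volume.restrict (Set.Ico (0:ℝ) 1) ∧
      -- `T^N(Y)` is independent of `(N, ⌊q^N Y⌋)`
      ProbabilityTheory.IndepFun (fun ω => (T q)^[N ω] (Y ω))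
        (fun ω => (N ω, ⌊(q : ℝ) ^ (N ω) * Y ω⌋)) ℙ ∧
      -- joint law of `{N ≤ n}` and `Y`
      ∀ n : ℕ, ∀ A : Set ℝ, MeasurableSet A → A ⊆ Set.Ico (0:ℝ) 1 →
        (ℙ ({ω | N ω ≤ n} ∩ Y ⁻¹' A)).toReal
          = ∑ k ∈ Finset.range (n + 1), ∑ j ∈ Finset.Icc 1 (q ^ k),
              ckn f q j k * (volume (A ∩ Ikn q k j)).toReal :=
  stmt5_general q hq f hf_nonneg hf_supp hf_pdf hf_lsc
end

section
/- Let q ≥ 2 be an integer and let X be a random variable with values in [0,1) whose law P_0 has density f, where f is lower semi-continuous at Lebesgue-almost every point of [0,1). Then for every n ≥ 0, the law P_n of T^n(X) satisfies d_TV(P_n, μ) ≤ 1 − q^{−n} Σ_{k=1}^{q^n} inf_{I_{k;n}} f. -/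
open MeasureTheory Set

/-- Total variation distance `d_TV(ν₁,ν₂) = sup_{Borel A} |ν₁(A) − ν₂(A)|`. -/
noncomputable def dTV (ν₁ ν₂ : Measure ℝ) : ℝ :=
  ⨆ A : {A : Set ℝ // MeasurableSet A}, |(ν₁ A.1).toReal - (ν₂ A.1).toReal|

lemma iterate_T (q : ℕ) (n : ℕ) {x : ℝ} (hx : x ∈ Set.Ico (0:ℝ) 1) :
    (T q)^[n] x = Int.fract ((q:ℝ)^n * x) := by
  induction n generalizing x with
  | zero => simpa using (Int.fract_eq_self.mpr ⟨hx.1, hx.2⟩).symm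
  | succ n ih =>
    rw [Function.iterate_succ_apply]
    have hTx : T q x ∈ Set.Ico (0:ℝ) 1 := ⟨Int.fract_nonneg _, Int.fract_lt_one _⟩
    rw [ih hTx]
    have : (q:ℝ)^n * T q x = (q:ℝ)^(n+1) * x - ((q^n * ⌊(q:ℝ)*x⌋ : ℤ) : ℝ) := by
      show (q:ℝ)^n * Int.fract ((q:ℝ)*x) = _
      rw [Int.fract]; push_cast; ring
    rw [this, Int.fract_sub_intCast]

lemma preimage_affine_volume {m : ℝ} (t : ℝ) (hm : m ≠ 0) (B : Set ℝ) :
    volume {x : ℝ | m * x - t ∈ B} = ENNReal.ofReal |m⁻¹| * volume B := by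
  have h : {x : ℝ | m * x - t ∈ B} = (m * ·) ⁻¹' ((· + (-t)) ⁻¹' B) := by
    ext x; simp [sub_eq_add_neg]
  rw [h, Real.volume_preimage_mul_left hm, measure_preimage_add_right]

lemma mem_Ikn_iff_s7 {q n k : ℕ} (hq : 0 < q) {x : ℝ} :
    x ∈ Ikn q n k ↔ (q:ℝ)^n * x - ((k:ℝ) - 1) ∈ Set.Ico (0:ℝ) 1 := by
  have hm : (0:ℝ) < (q:ℝ)^n := by positivity
  constructor
  · rintro ⟨h1, h2⟩
    exact ⟨by nlinarith [(div_le_iff₀ hm).mp h1], by nlinarith [(lt_div_iff₀ hm).mp h2]⟩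
  · rintro ⟨h1, h2⟩
    exact ⟨(div_le_iff₀ hm).mpr (by nlinarith), (lt_div_iff₀ hm).mpr (by nlinarith)⟩

lemma fract_eq_on_Ikn {q n k : ℕ} (hq : 0 < q) (hk : 1 ≤ k) {x : ℝ} (hx : x ∈ Ikn q n k) :
    Int.fract ((q:ℝ)^n * x) = (q:ℝ)^n * x - ((k:ℝ) - 1) := by
  have h := (mem_Ikn_iff_s7 hq).mp hx
  have hfl : ⌊(q:ℝ)^n * x⌋ = (k:ℤ) - 1 := by
    rw [Int.floor_eq_iff]
    constructor
    · push_cast; linarith [h.1]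
    · push_cast; linarith [h.2]
  rw [Int.fract, hfl]; push_cast; ring

lemma Ikn_disjoint {q n : ℕ} (hq : 0 < q) {k j : ℕ} (hkj : k ≠ j) :
    Disjoint (Ikn q n k) (Ikn q n j) := by
  have hm : (0:ℝ) < (q:ℝ)^n := by positivity
  have key : ∀ a b : ℕ, a < b → Disjoint (Ikn q n a) (Ikn q n b) := by
    intro a b hab
    rw [Ikn, Ikn, Set.Ico_disjoint_Ico]
    have : (a:ℝ) ≤ (b:ℝ) - 1 := by
      have : (a:ℝ) + 1 ≤ (b:ℝ) := by exact_mod_cast hab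
      linarith
    refine le_trans (min_le_left _ _) (le_trans ?_ (le_max_right _ _))
    gcongr
  rcases lt_or_gt_of_ne hkj with h | h
  · exact key _ _ h
  · exact (key _ _ h).symm

theorem stmt7
    {Ω : Type*} [MeasurableSpace Ω] (ℙ : Measure Ω) [IsProbabilityMeasure ℙ]
    (q : ℕ) (hq : 2 ≤ q)
    (f : ℝ → ℝ) (hf_meas : Measurable f) (hf_nonneg : ∀ x, 0 ≤ f x)
    (hf_supp : ∀ x, x ∉ Set.Ico (0:ℝ) 1 → f x = 0)
    -- `f` is lower semi-continuous at Lebesgue-almost every point of `[0,1)`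
    (hf_lsc : ∀ᵐ x ∂(volume : Measure ℝ),
      x ∈ Set.Ico (0:ℝ) 1 → LowerSemicontinuousAt f x)
    (X : Ω → ℝ) (hX : Measurable X) (hXrange : ∀ ω, X ω ∈ Set.Ico (0:ℝ) 1)
    (hlaw : Measure.map X ℙ = volume.withDensity (fun x => ENNReal.ofReal (f x)))
    (n : ℕ) :
    dTV (Measure.map (fun ω => (T q)^[n] (X ω)) ℙ) (volume.restrict (Set.Ico (0:ℝ) 1))
      ≤ 1 - (q : ℝ) ^ (-(n : ℤ)) * ∑ k ∈ Finset.Icc 1 (q ^ n), sInf (f '' Ikn q n k) := by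
  have hq0 : 0 < q := lt_of_lt_of_le two_pos hq
  set g : ℝ → ℝ := fun x => Int.fract ((q:ℝ)^n * x) with hg_def
  have hg : Measurable g := measurable_fract.comp (measurable_const_mul _)
  set ν : Measure ℝ := volume.withDensity (fun x => ENNReal.ofReal (f x)) with hν_def
  have hmapeq : Measure.map (fun ω => (T q)^[n] (X ω)) ℙ = Measure.map g ν := by
    have : (fun ω => (T q)^[n] (X ω)) = g ∘ X := by
      funext ω; exact iterate_T q n (hXrange ω)
    rw [this, ← Measure.map_map hg hX, hlaw]
  rw [hmapeq]
  have hνprob : IsProbabilityMeasure ν := by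
    rw [← hlaw]; exact Measure.isProbabilityMeasure_map hX.aemeasurable
  have hPprob : IsProbabilityMeasure (Measure.map g ν) := Measure.isProbabilityMeasure_map hg.aemeasurable
  have hμrprob : IsProbabilityMeasure (volume.restrict (Set.Ico (0:ℝ) 1)) := by
    constructor
    rw [Measure.restrict_apply_univ, Real.volume_Ico]
    norm_num
  set c : ℝ := (q : ℝ) ^ (-(n : ℤ)) * ∑ k ∈ Finset.Icc 1 (q ^ n), sInf (f '' Ikn q n k) with hc_def
  have hm : (0:ℝ) < (q:ℝ)^n := by positivity
  have hck_nonneg : ∀ k, 0 ≤ sInf (f '' Ikn q n k) := by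
    intro k
    apply Real.sInf_nonneg
    rintro x ⟨y, _, rfl⟩
    exact hf_nonneg y
  have hc_nonneg : 0 ≤ c := by
    apply mul_nonneg (by positivity)
    exact Finset.sum_nonneg fun k _ => hck_nonneg k
  have hzpow : (q:ℝ) ^ (-(n:ℤ)) = ((q:ℝ)^n)⁻¹ := by
    rw [zpow_neg, zpow_natCast]
  -- key lower bound
  have key : ∀ A : Set ℝ, MeasurableSet A →
      ENNReal.ofReal c * (volume.restrict (Set.Ico (0:ℝ) 1)) A ≤ Measure.map g ν A := by
    intro A hA
    rw [Measure.map_apply hg hA, Measure.restrict_apply hA]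
    set B := A ∩ Set.Ico (0:ℝ) 1 with hB_def
    have hB : MeasurableSet B := hA.inter measurableSet_Ico
    -- each piece
    have piece_eq : ∀ k ∈ Finset.Icc 1 (q^n),
        (g ⁻¹' A) ∩ Ikn q n k = {x : ℝ | (q:ℝ)^n * x - ((k:ℝ)-1) ∈ B} := by
      intro k hk
      rw [Finset.mem_Icc] at hk
      ext x
      simp only [Set.mem_inter_iff, Set.mem_preimage, Set.mem_setOf_eq, hB_def]
      constructor
      · rintro ⟨hxA, hxI⟩
        have hxA' : Int.fract ((q:ℝ)^n * x) ∈ A := hxA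
        rw [fract_eq_on_Ikn hq0 hk.1 hxI] at hxA'
        exact ⟨hxA', (mem_Ikn_iff_s7 hq0).mp hxI⟩
      · rintro ⟨hxA, hxIco⟩
        have hxI : x ∈ Ikn q n k := (mem_Ikn_iff_s7 hq0).mpr hxIco
        refine ⟨?_, hxI⟩
        show Int.fract ((q:ℝ)^n * x) ∈ A
        rw [fract_eq_on_Ikn hq0 hk.1 hxI]
        exact hxA
    have piece_vol : ∀ k ∈ Finset.Icc 1 (q^n),
        volume ((g ⁻¹' A) ∩ Ikn q n k) = ENNReal.ofReal ((q:ℝ)^n)⁻¹ * volume B := by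
      intro k hk
      rw [piece_eq k hk, preimage_affine_volume _ (ne_of_gt hm), abs_of_pos (by positivity)]
    have piece_meas : ∀ k, MeasurableSet ((g ⁻¹' A) ∩ Ikn q n k) :=
      fun k => (hg hA).inter measurableSet_Ico
    have piece_lb : ∀ k ∈ Finset.Icc 1 (q^n),
        ENNReal.ofReal (sInf (f '' Ikn q n k)) * (ENNReal.ofReal ((q:ℝ)^n)⁻¹ * volume B)
          ≤ ν ((g ⁻¹' A) ∩ Ikn q n k) := by
      intro k hk
      rw [← piece_vol k hk, hν_def, withDensity_apply _ (piece_meas k)]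
      calc ENNReal.ofReal (sInf (f '' Ikn q n k)) * volume ((g ⁻¹' A) ∩ Ikn q n k)
          = ∫⁻ _ in (g ⁻¹' A) ∩ Ikn q n k, ENNReal.ofReal (sInf (f '' Ikn q n k)) ∂volume := by
            rw [setLIntegral_const]
        _ ≤ ∫⁻ x in (g ⁻¹' A) ∩ Ikn q n k, ENNReal.ofReal (f x) ∂volume := by
            apply setLIntegral_mono' (piece_meas k)
            intro x hx
            apply ENNReal.ofReal_le_ofReal
            have hbdd : BddBelow (f '' Ikn q n k) :=
              ⟨0, by rintro y ⟨z, _, rfl⟩; exact hf_nonneg z⟩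
            exact csInf_le hbdd ⟨x, hx.2, rfl⟩
    have sum_le : ∑ k ∈ Finset.Icc 1 (q^n), ν ((g ⁻¹' A) ∩ Ikn q n k) ≤ ν (g ⁻¹' A) := by
      rw [← measure_biUnion_finset ?_ (fun k _ => piece_meas k)]
      · exact measure_mono (Set.iUnion₂_subset fun k _ => Set.inter_subset_left)
      · intro k hk j hj hkj
        exact (Set.disjoint_left.mpr fun x hx hx' =>
          (Set.disjoint_left.mp (Ikn_disjoint hq0 hkj) hx.2 hx'.2))
    calc ENNReal.ofReal c * volume B
        = (∑ k ∈ Finset.Icc 1 (q^n), ENNReal.ofReal (sInf (f '' Ikn q n k)) *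
            (ENNReal.ofReal ((q:ℝ)^n)⁻¹ * volume B)) := by
          rw [hc_def, hzpow, ENNReal.ofReal_mul (by positivity),
            ENNReal.ofReal_sum_of_nonneg (fun k _ => hck_nonneg k)]
          simp only [Finset.sum_mul, Finset.mul_sum]
          exact Finset.sum_congr rfl fun k _ => by ring
      _ ≤ ∑ k ∈ Finset.Icc 1 (q^n), ν ((g ⁻¹' A) ∩ Ikn q n k) :=
          Finset.sum_le_sum piece_lb
      _ ≤ ν (g ⁻¹' A) := sum_le
  -- c ≤ 1
  have hc_le_one : c ≤ 1 := by
    have h := key Set.univ MeasurableSet.univ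
    rw [measure_univ, measure_univ, mul_one] at h
    exact ENNReal.ofReal_le_one.mp h
  -- final bound
  apply ciSup_le
  rintro ⟨A, hA⟩
  set P := Measure.map g ν
  set μr := volume.restrict (Set.Ico (0:ℝ) 1)
  have hab : ∀ S : Set ℝ, MeasurableSet S → c * (μr S).toReal ≤ (P S).toReal := by
    intro S hS
    have h := key S hS
    have := ENNReal.toReal_mono (measure_ne_top P S) h
    rwa [ENNReal.toReal_mul, ENNReal.toReal_ofReal hc_nonneg] at this
  have h1 := hab A hA
  have h2 := hab Aᶜ hA.compl
  have hPc : (P Aᶜ).toReal = 1 - (P A).toReal := by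
    rw [measure_compl hA (measure_ne_top _ _), measure_univ,
      ENNReal.toReal_sub_of_le prob_le_one (by simp)]
    simp
  have hμc : (μr Aᶜ).toReal = 1 - (μr A).toReal := by
    rw [measure_compl hA (measure_ne_top _ _), measure_univ,
      ENNReal.toReal_sub_of_le prob_le_one (by simp)]
    simp
  rw [hPc, hμc] at h2
  have hb0 : 0 ≤ (μr A).toReal := ENNReal.toReal_nonneg
  have hb1 : (μr A).toReal ≤ 1 := by
    have h := prob_le_one (μ := μr) (s := A)
    calc (μr A).toReal ≤ (1 : ENNReal).toReal := ENNReal.toReal_mono (by simp) h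
      _ = 1 := by simp
  show |(P A).toReal - (μr A).toReal| ≤ 1 - c
  rw [abs_le]
  constructor
  · nlinarith [mul_nonneg (sub_nonneg.2 hc_le_one) hb0]
  · nlinarith [mul_nonneg (sub_nonneg.2 hc_le_one) (sub_nonneg.2 hb1)]
end

section
/- Let q ≥ 2 be an integer. There exists a constant C > 0 such that the following holds: for every twice differentiable function g : (0,1) → ℝ with ∫_0^1 g(t) dt = 1 and ‖g″‖_∞ = sup_{(0,1)} |g″| < ∞, every n ≥ 1, every x ∈ (0,1), and every choice of points ξ_{n,j} ∈ (q^{−n} j, q^{−n}(j+1)) for j = 0,…,q^n−1, one has |g_n(x) − 1 − q^{−2n}(x − 1/2) Σ_{j=0}^{q^n−1} g′(ξ_{n,j})| ≤ C ‖g″‖_∞ q^{−2n}. -/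
/-!
Split `(0,1)` into the `N = q^n` cells `I_j = (j/N, (j+1)/N)`, so that `(j+x)/N ∈ I_j` and
`∫_{I_j} ((j+x)/N - s) ds = (x - 1/2)/N²`. Since `∫ g = 1`, the error is then the sum over `j` of
`∫_{I_j} (g((j+x)/N) - g(s) - g'(ξ_j)((j+x)/N - s)) ds`. On `I_j` the function `g - g'(ξ_j)·id`
has derivative `g' - g'(ξ_j)`, of size at most `‖g''‖_∞/N`, so each integrand is `O(‖g''‖_∞/N²)`
and the `N` integrals over cells of length `1/N` add up to at most `‖g''‖_∞/N²`.
-/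

open MeasureTheory Set

/-- `g_n(x) = q^{−n} Σ_{j=0}^{q^n−1} g(q^{−n}(j+x))`. -/
noncomputable def gIter (q : ℕ) (g : ℝ → ℝ) (n : ℕ) (x : ℝ) : ℝ :=
  (q : ℝ) ^ (-(n : ℤ)) * ∑ j ∈ Finset.range (q ^ n), g (((j : ℝ) + x) / (q : ℝ) ^ n)

theorem abs_sub_sub_mul_sub_le_of_hasDerivWithinAt {s : Set ℝ} (hs : Convex ℝ s)
    {f f' : ℝ → ℝ} {d K : ℝ} (hf : ∀ w ∈ s, HasDerivWithinAt f (f' w) s w)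
    (hK : ∀ w ∈ s, |f' w - d| ≤ K) {a b : ℝ} (ha : a ∈ s) (hb : b ∈ s) :
    |f a - f b - d * (a - b)| ≤ K * |a - b| := by
  have hder : ∀ w ∈ s, HasDerivWithinAt (fun w => f w - d * w) (f' w - d) s w := fun w hw => by
    have := (hf w hw).sub ((hasDerivWithinAt_id w s).const_mul d)
    rwa [mul_one] at this
  have := hs.norm_image_sub_le_of_norm_hasDerivWithin_le hder hK hb ha
  simp only [Real.norm_eq_abs] at this
  calc |f a - f b - d * (a - b)| = |f a - d * a - (f b - d * b)| := by congr 1; ring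
    _ ≤ K * |a - b| := this

theorem abs_sub_sub_deriv_mul_sub_le_of_Ioo {g g' g'' : ℝ → ℝ} {u v M : ℝ}
    (hg : ∀ w ∈ Ioo u v, HasDerivAt g (g' w) w) (hg' : ∀ w ∈ Ioo u v, HasDerivAt g' (g'' w) w)
    (hM : ∀ w ∈ Ioo u v, |g'' w| ≤ M) {a b ξ : ℝ} (ha : a ∈ Ioo u v) (hb : b ∈ Ioo u v)
    (hξ : ξ ∈ Ioo u v) :
    |g a - g b - g' ξ * (a - b)| ≤ M * (v - u) ^ 2 := by
  have hM0 : 0 ≤ M := (abs_nonneg _).trans (hM a ha)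
  have dist_le : ∀ y ∈ Ioo u v, ∀ z ∈ Ioo u v, |y - z| ≤ v - u := fun y hy z hz =>
    abs_sub_le_iff.2 ⟨by linarith [hy.2, hz.1], by linarith [hy.1, hz.2]⟩
  have hg'_lip : ∀ w ∈ Ioo u v, |g' w - g' ξ| ≤ M * (v - u) := fun w hw => by
    have := (convex_Ioo u v).norm_image_sub_le_of_norm_hasDerivWithin_le
      (fun y hy => (hg' y hy).hasDerivWithinAt) hM hξ hw
    simp only [Real.norm_eq_abs] at this
    exact this.trans (mul_le_mul_of_nonneg_left (dist_le w hw ξ hξ) hM0)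
  calc |g a - g b - g' ξ * (a - b)| ≤ M * (v - u) * |a - b| :=
        abs_sub_sub_mul_sub_le_of_hasDerivWithinAt (convex_Ioo u v)
          (fun w hw => (hg w hw).hasDerivWithinAt) hg'_lip ha hb
    _ ≤ M * (v - u) * (v - u) :=
        mul_le_mul_of_nonneg_left (dist_le a ha b hb) (mul_nonneg hM0 (by linarith [ha.1, ha.2]))
    _ = M * (v - u) ^ 2 := by ring

theorem intervalIntegral_const_sub_sub_mul_sub {g : ℝ → ℝ} {u v : ℝ}
    (hg : IntervalIntegrable g volume u v) (y d a : ℝ) :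
    ∫ s in u..v, (y - g s - d * (a - s))
      = (v - u) * y - (∫ s in u..v, g s) - d * (v - u) * (a - (u + v) / 2) := by
  have hlin : IntervalIntegrable (fun s => d * (a - s)) volume u v := by
    apply Continuous.intervalIntegrable; fun_prop
  rw [intervalIntegral.integral_sub (intervalIntegrable_const.sub hg) hlin,
    intervalIntegral.integral_sub intervalIntegrable_const hg, intervalIntegral.integral_const,
    intervalIntegral.integral_const_mul,
    intervalIntegral.integral_sub intervalIntegrable_const intervalIntegral.intervalIntegrable_id,
    intervalIntegral.integral_const, integral_id, smul_eq_mul, smul_eq_mul]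
  ring

theorem abs_intervalIntegral_le_of_forall_Ioo {F : ℝ → ℝ} {u v K : ℝ} (huv : u ≤ v)
    (hF : ∀ s ∈ Ioo u v, |F s| ≤ K) : |∫ s in u..v, F s| ≤ K * (v - u) := by
  rw [intervalIntegral.integral_of_le huv, integral_Ioc_eq_integral_Ioo,
    ← Real.volume_real_Ioo_of_le huv]
  exact norm_setIntegral_le_of_norm_le_const (f := F) measure_Ioo_lt_top hF

theorem div_mem_Icc_zero_one {k N : ℕ} (hk : k ≤ N) : (k / N : ℝ) ∈ Icc 0 1 :=
  ⟨by positivity, div_le_one_of_le₀ (by exact_mod_cast hk) (by positivity)⟩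

theorem sum_intervalIntegral_uniform_partition {g : ℝ → ℝ} {N : ℕ} (hN : 0 < N)
    (hg : IntegrableOn g (Ioo 0 1)) :
    ∑ j ∈ Finset.range N, ∫ s in (j / N : ℝ)..((j + 1) / N), g s = ∫ s in Ioo 0 1, g s := by
  have h01 : IntervalIntegrable g volume 0 1 := by
    rw [intervalIntegrable_iff_integrableOn_Ioo_of_le zero_le_one]
    exact hg
  have hcells := intervalIntegral.sum_integral_adjacent_intervals
    (a := fun k : ℕ => (k / N : ℝ)) (μ := volume) (n := N) fun k hk =>
      h01.mono_set (uIcc_subset_uIcc (by simpa using div_mem_Icc_zero_one hk.le)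
        (by simpa using div_mem_Icc_zero_one (Nat.succ_le_of_lt hk)))
  have hN' : (N : ℝ) ≠ 0 := by positivity
  simp only [Nat.cast_add, Nat.cast_one, Nat.cast_zero, zero_div, div_self hN'] at hcells
  rw [hcells, intervalIntegral.integral_of_le zero_le_one, integral_Ioc_eq_integral_Ioo]

theorem Ioo_div_subset_Ioo_zero_one {j N : ℕ} (hj : j < N) :
    Ioo (j / N : ℝ) ((j + 1) / N) ⊆ Ioo 0 1 := by
  have := div_mem_Icc_zero_one (Nat.succ_le_of_lt hj)
  push_cast at this
  exact Ioo_subset_Ioo (by positivity) this.2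

theorem add_div_mem_Ioo {x : ℝ} (hx : x ∈ Ioo 0 1) (j : ℕ) {N : ℕ} (hN : 0 < N) :
    (j + x) / N ∈ Ioo (j / N : ℝ) ((j + 1) / N) := by
  have hN' : (0 : ℝ) < N := by exact_mod_cast hN
  exact ⟨by gcongr; linarith [hx.1], by gcongr; linarith [hx.2]⟩

theorem abs_riemannSum_sub_integral_sub_le {N : ℕ} (hN : 0 < N) {g g' g'' : ℝ → ℝ} {M : ℝ}
    (hg : ∀ w ∈ Ioo (0 : ℝ) 1, HasDerivAt g (g' w) w)
    (hg' : ∀ w ∈ Ioo (0 : ℝ) 1, HasDerivAt g' (g'' w) w) (hM : ∀ w ∈ Ioo (0 : ℝ) 1, |g'' w| ≤ M)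
    (hint : IntegrableOn g (Ioo 0 1)) {x : ℝ} (hx : x ∈ Ioo 0 1) (ξ : ℕ → ℝ)
    (hξ : ∀ j < N, ξ j ∈ Ioo (j / N : ℝ) ((j + 1) / N)) :
    |(∑ j ∈ Finset.range N, g ((j + x) / N)) / N - (∫ t in Ioo 0 1, g t)
        - (x - 1 / 2) / N ^ 2 * ∑ j ∈ Finset.range N, g' (ξ j)| ≤ M / N ^ 2 := by
  have hN' : (0 : ℝ) < N := by exact_mod_cast hN
  have hcell_ordered : ∀ j < N, (j / N : ℝ) ≤ (j + 1) / N := fun j _ => by gcongr; linarith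
  have hcell_int : ∀ j < N, IntervalIntegrable g volume (j / N) ((j + 1) / N) := fun j hj => by
    rw [intervalIntegrable_iff_integrableOn_Ioo_of_le (hcell_ordered j hj)]
    exact hint.mono_set (Ioo_div_subset_Ioo_zero_one hj)
  have hcell_eq : ∀ j < N, ∫ s in (j / N : ℝ)..((j + 1) / N),
      (g ((j + x) / N) - g s - g' (ξ j) * ((j + x) / N - s))
        = g ((j + x) / N) / N - (∫ s in (j / N : ℝ)..((j + 1) / N), g s)
          - (x - 1 / 2) / N ^ 2 * g' (ξ j) := fun j hj => by
    rw [intervalIntegral_const_sub_sub_mul_sub (hcell_int j hj)]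
    field_simp
    ring
  have hcell_bound : ∀ j < N, |∫ s in (j / N : ℝ)..((j + 1) / N),
      (g ((j + x) / N) - g s - g' (ξ j) * ((j + x) / N - s))| ≤ M / N ^ 3 := fun j hj => by
    have hsub := Ioo_div_subset_Ioo_zero_one hj
    refine (abs_intervalIntegral_le_of_forall_Ioo (hcell_ordered j hj) fun s hs =>
      abs_sub_sub_deriv_mul_sub_le_of_Ioo (fun w hw => hg w (hsub hw))
        (fun w hw => hg' w (hsub hw)) (fun w hw => hM w (hsub hw))
        (add_div_mem_Ioo hx j hN) hs (hξ j hj)).trans_eq ?_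
    field_simp
    ring
  calc _ = |∑ j ∈ Finset.range N, ∫ s in (j / N : ℝ)..((j + 1) / N),
          (g ((j + x) / N) - g s - g' (ξ j) * ((j + x) / N - s))| := by
        rw [Finset.sum_congr rfl fun j hj => hcell_eq j (Finset.mem_range.1 hj),
          Finset.sum_sub_distrib, Finset.sum_sub_distrib,
          sum_intervalIntegral_uniform_partition hN hint, ← Finset.sum_div, ← Finset.mul_sum]
    _ ≤ ∑ _j ∈ Finset.range N, M / N ^ 3 := (Finset.abs_sum_le_sum_abs _ _).trans
        (Finset.sum_le_sum fun j hj => hcell_bound j (Finset.mem_range.1 hj))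
    _ = M / N ^ 2 := by
        rw [Finset.sum_const, Finset.card_range, nsmul_eq_mul]
        field_simp

theorem stmt11
    (q : ℕ) (hq : 2 ≤ q) :
    ∃ C : ℝ, 0 < C ∧
      ∀ (g g' g'' : ℝ → ℝ),
        (∀ x ∈ Set.Ioo (0:ℝ) 1, HasDerivAt g (g' x) x) →
        (∀ x ∈ Set.Ioo (0:ℝ) 1, HasDerivAt g' (g'' x) x) →
        (∫ t in Set.Ioo (0:ℝ) 1, g t = 1) →
        -- `‖g″‖_∞ < ∞`
        BddAbove ((fun x => |g'' x|) '' Set.Ioo (0:ℝ) 1) →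
        ∀ n : ℕ, 1 ≤ n → ∀ x ∈ Set.Ioo (0:ℝ) 1, ∀ ξ : ℕ → ℝ,
          (∀ j < q ^ n, ξ j ∈ Set.Ioo ((j : ℝ) / (q : ℝ) ^ n) (((j : ℝ) + 1) / (q : ℝ) ^ n)) →
          |gIter q g n x - 1
              - (q : ℝ) ^ (-(2 * n : ℤ)) * (x - 1 / 2) *
                  ∑ j ∈ Finset.range (q ^ n), g' (ξ j)|
            ≤ C * sSup ((fun y => |g'' y|) '' Set.Ioo (0:ℝ) 1) * (q : ℝ) ^ (-(2 * n : ℤ)) := by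
  refine ⟨1, one_pos, fun g g' g'' hg hg' hint hbdd n _ x hx ξ hξ => ?_⟩
  have hint' : IntegrableOn g (Ioo 0 1) := by
    by_contra h
    rw [integral_undef h] at hint
    exact zero_ne_one hint
  have key := abs_riemannSum_sub_integral_sub_le (pow_pos (by omega : 0 < q) n) hg hg'
    (fun y hy => le_csSup hbdd (mem_image_of_mem _ hy)) hint' hx ξ (by push_cast; exact hξ)
  rw [hint] at key
  push_cast at key
  have hpow : (q : ℝ) ^ (-(2 * n : ℤ)) = ((q : ℝ) ^ n)⁻¹ ^ 2 := by
    rw [← zpow_natCast, ← zpow_natCast, ← zpow_neg_one, ← zpow_mul, ← zpow_mul]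
    ring_nf
  rw [gIter, hpow, one_mul, zpow_neg, zpow_natCast]
  convert key using 3 <;> ring
end

section
/- Let q ≥ 2 be an integer, let X be a random variable with values in [0,1) whose law has density f concentrated on (0,1), and let g : (0,1) → ℝ be differentiable with ∫_0^1 g(t) dt = 1 and ‖g′‖_∞ < ∞. Then for every n ≥ 1, the law P_n of T^n(X) satisfies d_TV(P_n, μ) ≤ (1/2)‖f − g‖_1 + (1/6) q^{−2n} Σ_{j=0}^{q^n−1} ‖g′_{n,j}‖_∞ ≤ (1/2)‖f − g‖_1 + (1/6) q^{−n} ‖g′‖_∞. -/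
/-!
With `N = q ^ n` we have `T^n x = fract (N x)`, so the law of `T^n(X)` has on `[0,1)` the density
`L f (y) = N⁻¹ ∑_{j<N} f ((y + j) / N)`, where `L` is the transfer operator of `x ↦ fract (N x)`.
Hence `d_TV(P_n, μ) ≤ ½ ‖L f - 1‖₁` (Scheffé), and since `L` is an `L¹`-contraction,
`‖L f - 1‖₁ ≤ ‖f - g‖₁ + ‖L g - 1‖₁`. Finally `L g - 1 = N⁻¹ ∑_j (g_j - ∫ g_j)` with
`g_j (y) = g ((y + j) / N)`, which is `‖g′_{n,j}‖_∞ / N`-Lipschitz on `(0,1)`; a function with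
Lipschitz constant `K` there is within `K / 3` of its mean in `L¹`, as `∫∫ |y - t| = 1/3`.
-/

open MeasureTheory Set

lemma integral_Ioo_abs_sub {y : ℝ} (hy : y ∈ Icc (0:ℝ) 1) :
    ∫ t in Ioo (0:ℝ) 1, |y - t| = (y ^ 2 + (1 - y) ^ 2) / 2 := by
  rw [← integral_Ioc_eq_integral_Ioo, ← intervalIntegral.integral_of_le zero_le_one]
  have hcont : Continuous fun t : ℝ => |y - t| := by fun_prop
  rw [← intervalIntegral.integral_add_adjacent_intervals (b := y)
    (hcont.intervalIntegrable _ _) (hcont.intervalIntegrable _ _)]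
  have hleft : ∫ t in (0:ℝ)..y, |y - t| = ∫ t in (0:ℝ)..y, (y - t) :=
    intervalIntegral.integral_congr fun t ht => by
      rw [uIcc_of_le hy.1] at ht
      exact abs_of_nonneg (by linarith [ht.2])
  have hright : ∫ t in y..(1:ℝ), |y - t| = ∫ t in y..(1:ℝ), (t - y) :=
    intervalIntegral.integral_congr fun t ht => by
      rw [uIcc_of_le hy.2] at ht
      rw [abs_sub_comm]
      exact abs_of_nonneg (by linarith [ht.1])
  rw [hleft, hright, intervalIntegral.integral_sub intervalIntegrable_const
      intervalIntegral.intervalIntegrable_id,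
    intervalIntegral.integral_sub intervalIntegral.intervalIntegrable_id intervalIntegrable_const]
  simp only [intervalIntegral.integral_const, integral_id, smul_eq_mul]
  ring

lemma integral_Ioo_sq_add_one_sub_sq_div_two :
    ∫ y in Ioo (0:ℝ) 1, (y ^ 2 + (1 - y) ^ 2) / 2 = 1 / 3 := by
  rw [← integral_Ioc_eq_integral_Ioo, ← intervalIntegral.integral_of_le zero_le_one]
  have hpoly : (fun y : ℝ => (y ^ 2 + (1 - y) ^ 2) / 2) = fun y => y ^ 2 - y + 1 / 2 := by
    funext y; ring
  rw [hpoly, intervalIntegral.integral_add (Continuous.intervalIntegrable (by fun_prop) _ _)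
      intervalIntegrable_const,
    intervalIntegral.integral_sub (Continuous.intervalIntegrable (by fun_prop) _ _)
      intervalIntegral.intervalIntegrable_id]
  simp only [integral_pow, integral_id, intervalIntegral.integral_const, smul_eq_mul]
  norm_num

lemma integral_abs_sub_integral_le_of_lipschitz {φ : ℝ → ℝ} {L : ℝ}
    (hφ : IntegrableOn φ (Ioo 0 1))
    (hL : ∀ a ∈ Ioo (0:ℝ) 1, ∀ b ∈ Ioo (0:ℝ) 1, |φ a - φ b| ≤ L * |a - b|) :
    ∫ y in Ioo (0:ℝ) 1, |φ y - ∫ t in Ioo (0:ℝ) 1, φ t| ≤ L / 3 := by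
  have hvol : volume.real (Ioo (0:ℝ) 1) = 1 := by simp
  have hpoint : ∀ y ∈ Ioo (0:ℝ) 1,
      |φ y - ∫ t in Ioo (0:ℝ) 1, φ t| ≤ L * ((y ^ 2 + (1 - y) ^ 2) / 2) := by
    intro y hy
    calc |φ y - ∫ t in Ioo (0:ℝ) 1, φ t|
        = |∫ t in Ioo (0:ℝ) 1, (φ y - φ t)| := by
          rw [integral_sub (integrable_const _) hφ, setIntegral_const, hvol, one_smul]
      _ ≤ ∫ t in Ioo (0:ℝ) 1, |φ y - φ t| := abs_integral_le_integral_abs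
      _ ≤ ∫ t in Ioo (0:ℝ) 1, L * |y - t| :=
          setIntegral_mono_on ((integrable_const _).sub hφ).abs
            ((Continuous.integrableOn_Icc (by fun_prop)).mono_set Ioo_subset_Icc_self)
            measurableSet_Ioo fun t ht => hL y hy t ht
      _ = L * ((y ^ 2 + (1 - y) ^ 2) / 2) := by
          rw [integral_const_mul, integral_Ioo_abs_sub (Ioo_subset_Icc_self hy)]
  calc ∫ y in Ioo (0:ℝ) 1, |φ y - ∫ t in Ioo (0:ℝ) 1, φ t|
      ≤ ∫ y in Ioo (0:ℝ) 1, L * ((y ^ 2 + (1 - y) ^ 2) / 2) :=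
        setIntegral_mono_on (hφ.sub (integrable_const _)).abs
          ((Continuous.integrableOn_Icc (by fun_prop)).mono_set Ioo_subset_Icc_self)
          measurableSet_Ioo hpoint
    _ = L / 3 := by rw [integral_const_mul, integral_Ioo_sq_add_one_sub_sq_div_two]; ring

lemma abs_setIntegral_le_half_integral_abs {α : Type*} [MeasurableSpace α] {μ : Measure α}
    {s B : Set α} {w : α → ℝ} (hB : MeasurableSet B) (hBs : B ⊆ s)
    (hw : IntegrableOn w s μ) (hw0 : ∫ x in s, w x ∂μ = 0) :
    |∫ x in B, w x ∂μ| ≤ (1 / 2) * ∫ x in s, |w x| ∂μ := by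
  have hsB : s ∩ B = B := inter_eq_right.mpr hBs
  have hsplit := integral_inter_add_sdiff hB hw
  have hsplit_abs := integral_inter_add_sdiff hB hw.abs
  rw [hsB, hw0] at hsplit
  rw [hsB] at hsplit_abs
  have hB_le : |∫ x in B, w x ∂μ| ≤ ∫ x in B, |w x| ∂μ := abs_integral_le_integral_abs
  have hsB_le : |∫ x in s \ B, w x ∂μ| ≤ ∫ x in s \ B, |w x| ∂μ := abs_integral_le_integral_abs
  rw [show ∫ x in s \ B, w x ∂μ = -∫ x in B, w x ∂μ by linarith, abs_neg] at hsB_le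
  linarith

/-- The transfer (Perron–Frobenius) operator of `x ↦ fract (N x)`, acting on densities
supported in `[0,1)`. -/
noncomputable def fractMulTransfer (N : ℕ) (u : ℝ → ℝ) (y : ℝ) : ℝ :=
  ∑ j ∈ Finset.range N, (N : ℝ)⁻¹ * u ((y + j) / N)

lemma fractMulTransfer_sub (N : ℕ) (u v : ℝ → ℝ) (y : ℝ) :
    fractMulTransfer N (fun x => u x - v x) y
      = fractMulTransfer N u y - fractMulTransfer N v y := by
  simp only [fractMulTransfer, mul_sub, Finset.sum_sub_distrib]

lemma abs_fractMulTransfer_le (N : ℕ) (u : ℝ → ℝ) (y : ℝ) :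
    |fractMulTransfer N u y| ≤ fractMulTransfer N (fun x => |u x|) y := by
  unfold fractMulTransfer
  refine (Finset.abs_sum_le_sum_abs _ _).trans_eq (Finset.sum_congr rfl fun j _ => ?_)
  rw [abs_mul, abs_of_nonneg (by positivity)]

lemma MeasureTheory.Integrable.comp_add_div {u : ℝ → ℝ} (hu : Integrable u) (a : ℝ) {c : ℝ}
    (hc : c ≠ 0) :
    Integrable fun y => u ((y + a) / c) := by
  simpa only [div_eq_inv_mul] using (hu.comp_mul_left' (inv_ne_zero hc)).comp_add_right a

lemma MeasureTheory.Integrable.fractMulTransfer {u : ℝ → ℝ} (hu : Integrable u) (N : ℕ) :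
    Integrable (fractMulTransfer N u) := by
  unfold _root_.fractMulTransfer
  exact integrable_finsetSum _ fun j hj => (hu.comp_add_div _
    (Nat.cast_ne_zero.mpr (Nat.zero_lt_of_lt (Finset.mem_range.mp hj)).ne')).const_mul _

lemma setIntegral_preimage_mul_sub {c : ℝ} (hc : 0 < c) (a : ℝ) (u : ℝ → ℝ) {A : Set ℝ}
    (hA : MeasurableSet A) :
    ∫ x in (fun x => c * x - a) ⁻¹' A, u x = c⁻¹ * ∫ y in A, u ((y + a) / c) := by
  have hpre : MeasurableSet ((fun x => c * x - a) ⁻¹' A) :=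
    (measurable_id.const_mul c).sub_const a hA
  have hind : (fun x => ((fun x => c * x - a) ⁻¹' A).indicator u x)
      = fun x => A.indicator (fun y => u ((y + a) / c)) (c * x - a) := by
    funext x
    by_cases hx : c * x - a ∈ A
    · rw [indicator_of_mem (show x ∈ (fun x => c * x - a) ⁻¹' A from hx), indicator_of_mem hx]
      congr 1
      field_simp
      ring
    · rw [indicator_of_notMem (show x ∉ (fun x => c * x - a) ⁻¹' A from hx),
        indicator_of_notMem hx]
  rw [← integral_indicator hpre, hind,
    Measure.integral_comp_mul_left (fun t => A.indicator (fun y => u ((y + a) / c)) (t - a)),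
    integral_sub_right_eq_self, integral_indicator hA, abs_of_pos (inv_pos.mpr hc), smul_eq_mul]

lemma preimage_fract_mul_inter_Ico {N : ℕ} (hN : 0 < N) {A : Set ℝ} (hA : A ⊆ Ico 0 1) :
    (fun x => Int.fract ((N : ℝ) * x)) ⁻¹' A ∩ Ico 0 1
      = ⋃ j ∈ Finset.range N, (fun x => (N : ℝ) * x - j) ⁻¹' A := by
  have hN' : (0 : ℝ) < N := by exact_mod_cast hN
  ext x
  simp only [mem_inter_iff, mem_preimage, mem_Ico, mem_iUnion, Finset.mem_range, exists_prop]
  constructor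
  · rintro ⟨hxA, hx0, hx1⟩
    have hNx : 0 ≤ (N : ℝ) * x := by positivity
    refine ⟨⌊(N : ℝ) * x⌋₊, (Nat.floor_lt hNx).mpr (by nlinarith), ?_⟩
    rwa [natCast_floor_eq_intCast_floor hNx, Int.self_sub_floor]
  · rintro ⟨j, hj, hxA⟩
    obtain ⟨h0, h1⟩ := hA hxA
    have hj' : (j : ℝ) + 1 ≤ N := by exact_mod_cast hj
    refine ⟨?_, ?_, ?_⟩
    · rw [Int.fract_eq_iff.mpr ⟨h0, h1, j, by push_cast; ring⟩]
      exact hxA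
    · nlinarith [(j.cast_nonneg : (0 : ℝ) ≤ j)]
    · nlinarith

lemma pairwise_disjoint_preimage_mul_sub {c : ℝ} {A : Set ℝ} (hA : A ⊆ Ico 0 1) (s : Set ℕ) :
    s.Pairwise (Function.onFun Disjoint fun j : ℕ => (fun x => c * x - j) ⁻¹' A) := by
  intro i _ j _ hij
  refine Set.disjoint_left.mpr fun x hi hj => hij ?_
  obtain ⟨hi0, hi1⟩ := hA hi
  obtain ⟨hj0, hj1⟩ := hA hj
  have hij' : i < j + 1 := by exact_mod_cast (by linarith : (i : ℝ) < j + 1)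
  have hji' : j < i + 1 := by exact_mod_cast (by linarith : (j : ℝ) < i + 1)
  omega

lemma setIntegral_preimage_fract_mul {N : ℕ} (hN : 0 < N) {u : ℝ → ℝ} (hu : Integrable u)
    (hu0 : ∀ x ∉ Ico (0:ℝ) 1, u x = 0) {A : Set ℝ} (hA : MeasurableSet A) (hA1 : A ⊆ Ico 0 1) :
    ∫ x in (fun x => Int.fract ((N : ℝ) * x)) ⁻¹' A, u x = ∫ y in A, fractMulTransfer N u y := by
  have hN' : (0 : ℝ) < N := by exact_mod_cast hN
  have hpre : MeasurableSet ((fun x => Int.fract ((N : ℝ) * x)) ⁻¹' A) :=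
    (measurable_id.const_mul _).fract hA
  have hpieces : ∀ j : ℕ, MeasurableSet ((fun x => (N : ℝ) * x - j) ⁻¹' A) := fun j =>
    ((measurable_id.const_mul _).sub_const _) hA
  calc ∫ x in (fun x => Int.fract ((N : ℝ) * x)) ⁻¹' A, u x
      = ∫ x in (fun x => Int.fract ((N : ℝ) * x)) ⁻¹' A ∩ Ico 0 1, u x :=
        setIntegral_eq_of_subset_of_forall_sdiff_eq_zero hpre inter_subset_left
          fun x hx => hu0 x fun h => hx.2 ⟨hx.1, h⟩
    _ = ∑ j ∈ Finset.range N, ∫ x in (fun x => (N : ℝ) * x - j) ⁻¹' A, u x := by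
        rw [preimage_fract_mul_inter_Ico hN hA1, integral_biUnion_finset _ (fun j _ => hpieces j)
          (pairwise_disjoint_preimage_mul_sub hA1 _) fun j _ => hu.integrableOn]
    _ = ∑ j ∈ Finset.range N, ∫ y in A, (N : ℝ)⁻¹ * u ((y + j) / N) :=
        Finset.sum_congr rfl fun j _ => by
          rw [setIntegral_preimage_mul_sub hN' _ _ hA, integral_const_mul]
    _ = ∫ y in A, fractMulTransfer N u y := by
        unfold fractMulTransfer
        rw [integral_finsetSum _ fun j _ =>
          ((hu.comp_add_div _ hN'.ne').const_mul _).integrableOn]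

lemma integral_Ico_fractMulTransfer {N : ℕ} (hN : 0 < N) {u : ℝ → ℝ} (hu : Integrable u)
    (hu0 : ∀ x ∉ Ico (0:ℝ) 1, u x = 0) :
    ∫ y in Ico (0:ℝ) 1, fractMulTransfer N u y = ∫ x, u x := by
  have huniv : (fun x => Int.fract ((N : ℝ) * x)) ⁻¹' Ico 0 1 = univ :=
    eq_univ_of_forall fun x => ⟨Int.fract_nonneg _, Int.fract_lt_one _⟩
  rw [← setIntegral_preimage_fract_mul hN hu hu0 measurableSet_Ico subset_rfl, huniv,
    Measure.restrict_univ]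

lemma integrable_and_integral_eq_one_of_isProbabilityMeasure_withDensity {α : Type*}
    [MeasurableSpace α] {μ : Measure α} {f : α → ℝ} (hf : AEStronglyMeasurable f μ)
    (hf0 : ∀ x, 0 ≤ f x) [IsProbabilityMeasure (μ.withDensity fun x => ENNReal.ofReal (f x))] :
    Integrable f μ ∧ ∫ x, f x ∂μ = 1 := by
  have hlint : ∫⁻ x, ENNReal.ofReal (f x) ∂μ = 1 := by
    simpa [withDensity_apply _ MeasurableSet.univ] using
      measure_univ (μ := μ.withDensity fun x => ENNReal.ofReal (f x))
  refine ⟨(lintegral_ofReal_ne_top_iff_integrable hf (ae_of_all _ hf0)).mp (by simp [hlint]), ?_⟩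
  rw [integral_eq_lintegral_of_nonneg_ae (ae_of_all _ hf0) hf, hlint, ENNReal.toReal_one]

lemma measureReal_map_fract_mul_withDensity {N : ℕ} (hN : 0 < N) {f : ℝ → ℝ} (hf : Integrable f)
    (hf0 : ∀ x, 0 ≤ f x) (hf_supp : ∀ x ∉ Ico (0:ℝ) 1, f x = 0) {A : Set ℝ} (hA : MeasurableSet A) :
    ((volume.withDensity fun x => ENNReal.ofReal (f x)).map
        (fun x => Int.fract ((N : ℝ) * x)) A).toReal
      = ∫ y in A ∩ Ico 0 1, fractMulTransfer N f y := by
  have hφ : Measurable fun x : ℝ => Int.fract ((N : ℝ) * x) := (measurable_id.const_mul _).fract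
  have hA' : MeasurableSet (A ∩ Ico 0 1) := hA.inter measurableSet_Ico
  have hpre : (fun x => Int.fract ((N : ℝ) * x)) ⁻¹' A
      = (fun x => Int.fract ((N : ℝ) * x)) ⁻¹' (A ∩ Ico 0 1) := by
    ext x
    simp [Int.fract_nonneg, Int.fract_lt_one]
  rw [Measure.map_apply hφ hA, hpre, withDensity_apply _ (hφ hA'),
    ← ofReal_integral_eq_lintegral_ofReal hf.integrableOn (ae_of_all _ hf0),
    ENNReal.toReal_ofReal (setIntegral_nonneg (hφ hA') fun x _ => hf0 x),
    setIntegral_preimage_fract_mul hN hf hf_supp hA' inter_subset_right]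

lemma dTV_map_fract_mul_withDensity_le {N : ℕ} (hN : 0 < N) {f : ℝ → ℝ} (hf : Integrable f)
    (hf0 : ∀ x, 0 ≤ f x) (hf_supp : ∀ x ∉ Ico (0:ℝ) 1, f x = 0) (hf1 : ∫ x, f x = 1) :
    dTV ((volume.withDensity fun x => ENNReal.ofReal (f x)).map
        (fun x => Int.fract ((N : ℝ) * x))) (volume.restrict (Ico 0 1))
      ≤ 1 / 2 * ∫ y in Ico (0:ℝ) 1, |fractMulTransfer N f y - 1| := by
  have hw : IntegrableOn (fun y => fractMulTransfer N f y - 1) (Ico 0 1) :=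
    (hf.fractMulTransfer N).integrableOn.sub (integrableOn_const (by simp))
  have hw0 : ∫ y in Ico (0:ℝ) 1, (fractMulTransfer N f y - 1) = 0 := by
    rw [integral_sub (hf.fractMulTransfer N).integrableOn (integrableOn_const (by simp)),
      integral_Ico_fractMulTransfer hN hf hf_supp, hf1]
    simp
  have : Nonempty {A : Set ℝ // MeasurableSet A} := ⟨⟨∅, MeasurableSet.empty⟩⟩
  refine ciSup_le fun ⟨A, hA⟩ => ?_
  have hA' : MeasurableSet (A ∩ Ico 0 1) := hA.inter measurableSet_Ico
  have hvol : (volume.restrict (Ico (0:ℝ) 1) A).toReal = ∫ y in A ∩ Ico 0 1, (1 : ℝ) := by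
    rw [Measure.restrict_apply hA, setIntegral_const, smul_eq_mul, mul_one, measureReal_def]
  rw [measureReal_map_fract_mul_withDensity hN hf hf0 hf_supp hA, hvol,
    ← integral_sub ((hf.fractMulTransfer N).integrableOn)
      ((integrableOn_const (by simp)).mono_set inter_subset_right)]
  exact abs_setIntegral_le_half_integral_abs hA' inter_subset_right hw hw0

lemma Ioo_div_subset_Ioo {N j : ℕ} (hj : j < N) :
    Ioo ((j:ℝ) / N) ((j + 1) / N) ⊆ Ioo 0 1 := by
  have hN : (0:ℝ) < N := Nat.cast_pos.mpr (Nat.zero_lt_of_lt hj)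
  exact Ioo_subset_Ioo (by positivity) ((div_le_one hN).mpr (by exact_mod_cast hj))

lemma integral_abs_fractMulTransfer_sub_le {N : ℕ} (hN : 0 < N) {f G : ℝ → ℝ} (hf : Integrable f)
    (hG : Integrable G) (hf_supp : ∀ x ∉ Ico (0:ℝ) 1, f x = 0)
    (hG_supp : ∀ x ∉ Ico (0:ℝ) 1, G x = 0) (c : ℝ) :
    ∫ y in Ico (0:ℝ) 1, |fractMulTransfer N f y - c|
      ≤ (∫ x, |f x - G x|) + ∫ y in Ico (0:ℝ) 1, |fractMulTransfer N G y - c| := by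
  have hfG : Integrable fun x => |f x - G x| := (hf.sub hG).abs
  have hfG_supp : ∀ x ∉ Ico (0:ℝ) 1, |f x - G x| = 0 := fun x hx => by
    simp [hf_supp x hx, hG_supp x hx]
  have hGc : IntegrableOn (fun y => |fractMulTransfer N G y - c|) (Ico 0 1) :=
    ((hG.fractMulTransfer N).integrableOn.sub (integrableOn_const (by simp))).abs
  have hpoint : ∀ y, |fractMulTransfer N f y - c|
      ≤ fractMulTransfer N (fun x => |f x - G x|) y + |fractMulTransfer N G y - c| := fun y =>
    calc |fractMulTransfer N f y - c|
        = |fractMulTransfer N (fun x => f x - G x) y + (fractMulTransfer N G y - c)| := by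
          rw [fractMulTransfer_sub]; ring_nf
      _ ≤ |fractMulTransfer N (fun x => f x - G x) y| + |fractMulTransfer N G y - c| :=
          abs_add_le _ _
      _ ≤ _ := add_le_add_left (abs_fractMulTransfer_le _ _ _) _
  calc ∫ y in Ico (0:ℝ) 1, |fractMulTransfer N f y - c|
      ≤ ∫ y in Ico (0:ℝ) 1,
          (fractMulTransfer N (fun x => |f x - G x|) y + |fractMulTransfer N G y - c|) :=
        setIntegral_mono_on
          ((hf.fractMulTransfer N).integrableOn.sub (integrableOn_const (by simp))).abs
          ((hfG.fractMulTransfer N).integrableOn.add hGc) measurableSet_Ico fun y _ => hpoint y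
    _ = (∫ x, |f x - G x|) + ∫ y in Ico (0:ℝ) 1, |fractMulTransfer N G y - c| := by
        rw [integral_add (hfG.fractMulTransfer N).integrableOn hGc,
          integral_Ico_fractMulTransfer hN hfG hfG_supp]

lemma abs_comp_add_div_sub_le {G : ℝ → ℝ} {a c K : ℝ} (hc : 0 < c)
    (hK : ∀ x ∈ Ioo (a / c) ((a + 1) / c), ∀ y ∈ Ioo (a / c) ((a + 1) / c),
      |G x - G y| ≤ K * |x - y|) :
    ∀ x ∈ Ioo (0:ℝ) 1, ∀ y ∈ Ioo (0:ℝ) 1,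
      |G ((x + a) / c) - G ((y + a) / c)| ≤ K / c * |x - y| := by
  intro x hx y hy
  have hmem : ∀ t ∈ Ioo (0:ℝ) 1, (t + a) / c ∈ Ioo (a / c) ((a + 1) / c) := fun t ht =>
    ⟨div_lt_div_of_pos_right (by linarith [ht.1]) hc,
      div_lt_div_of_pos_right (by linarith [ht.2]) hc⟩
  calc |G ((x + a) / c) - G ((y + a) / c)| ≤ K * |(x + a) / c - (y + a) / c| :=
        hK _ (hmem x hx) _ (hmem y hy)
    _ = K / c * |x - y| := by
        rw [← sub_div, add_sub_add_right_eq_sub, abs_div, abs_of_pos hc]; ring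

lemma integral_abs_fractMulTransfer_sub_integral_le {N : ℕ} (hN : 0 < N) {G : ℝ → ℝ}
    (hG : Integrable G) (hG_supp : ∀ x ∉ Ico (0:ℝ) 1, G x = 0) {K : ℕ → ℝ}
    (hK : ∀ j < N, ∀ a ∈ Ioo ((j:ℝ) / N) ((j + 1) / N), ∀ b ∈ Ioo ((j:ℝ) / N) ((j + 1) / N),
      |G a - G b| ≤ K j * |a - b|) :
    ∫ y in Ico (0:ℝ) 1, |fractMulTransfer N G y - ∫ x, G x|
      ≤ ((N:ℝ) ^ 2)⁻¹ / 3 * ∑ j ∈ Finset.range N, K j := by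
  have hN' : (0:ℝ) < N := by exact_mod_cast hN
  set c : ℕ → ℝ := fun j => ∫ t in Ioo (0:ℝ) 1, G ((t + j) / N) with hc
  have hGj : ∀ j : ℕ, Integrable fun y => G ((y + j) / N) := fun j =>
    hG.comp_add_div _ hN'.ne'
  have hmean : ∫ x, G x = ∑ j ∈ Finset.range N, (N:ℝ)⁻¹ * c j := by
    rw [← integral_Ico_fractMulTransfer hN hG hG_supp, integral_Ico_eq_integral_Ioo]
    unfold fractMulTransfer
    rw [integral_finsetSum _ fun j _ => ((hGj j).const_mul _).integrableOn]
    simp only [integral_const_mul, hc]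
  have hpoint : ∀ y, |fractMulTransfer N G y - ∫ x, G x|
      ≤ ∑ j ∈ Finset.range N, (N:ℝ)⁻¹ * |G ((y + j) / N) - c j| := fun y => by
    rw [hmean, fractMulTransfer, ← Finset.sum_sub_distrib]
    refine (Finset.abs_sum_le_sum_abs _ _).trans_eq (Finset.sum_congr rfl fun j _ => ?_)
    rw [← mul_sub, abs_mul, abs_of_pos (inv_pos.mpr hN')]
  have hterm : ∀ j : ℕ, IntegrableOn (fun y => (N:ℝ)⁻¹ * |G ((y + j) / N) - c j|) (Ico 0 1) :=
    fun j => (((hGj j).integrableOn.sub (integrableOn_const (by simp))).abs).const_mul _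
  calc ∫ y in Ico (0:ℝ) 1, |fractMulTransfer N G y - ∫ x, G x|
      ≤ ∫ y in Ico (0:ℝ) 1, ∑ j ∈ Finset.range N, (N:ℝ)⁻¹ * |G ((y + j) / N) - c j| :=
        setIntegral_mono_on
          (((hG.fractMulTransfer N).integrableOn.sub (integrableOn_const (by simp))).abs)
          (integrable_finsetSum _ fun j _ => hterm j) measurableSet_Ico fun y _ => hpoint y
    _ = ∑ j ∈ Finset.range N, (N:ℝ)⁻¹ * ∫ y in Ioo (0:ℝ) 1, |G ((y + j) / N) - c j| := by
        rw [integral_finsetSum _ fun j _ => hterm j]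
        simp only [integral_const_mul, integral_Ico_eq_integral_Ioo]
    _ ≤ ∑ j ∈ Finset.range N, (N:ℝ)⁻¹ * (K j / N / 3) :=
        Finset.sum_le_sum fun j hj => mul_le_mul_of_nonneg_left
          (integral_abs_sub_integral_le_of_lipschitz (hGj j).integrableOn
            (abs_comp_add_div_sub_le hN' (hK j (Finset.mem_range.mp hj)))) (by positivity)
    _ = ((N:ℝ) ^ 2)⁻¹ / 3 * ∑ j ∈ Finset.range N, K j := by
        rw [Finset.mul_sum]
        exact Finset.sum_congr rfl fun j _ => by field_simp

theorem dTV_map_fract_mul_withDensity_le_of_hasDerivAt {N : ℕ} (hN : 0 < N) {f : ℝ → ℝ}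
    (hf : Integrable f) (hf0 : ∀ x, 0 ≤ f x) (hf_supp : ∀ x ∉ Ioo (0:ℝ) 1, f x = 0)
    (hf1 : ∫ x, f x = 1) {g g' : ℝ → ℝ} (hderiv : ∀ x ∈ Ioo (0:ℝ) 1, HasDerivAt g (g' x) x)
    (hg : IntegrableOn g (Ioo 0 1)) (hg1 : ∫ t in Ioo (0:ℝ) 1, g t = 1) {M : ℕ → ℝ}
    (hM : ∀ j < N, ∀ x ∈ Ioo ((j:ℝ) / N) ((j + 1) / N), |g' x| ≤ M j) :
    dTV ((volume.withDensity fun x => ENNReal.ofReal (f x)).map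
        (fun x => Int.fract ((N : ℝ) * x))) (volume.restrict (Ico 0 1))
      ≤ 1 / 2 * (∫ t in Ioo (0:ℝ) 1, |f t - g t|)
        + 1 / 6 * ((N:ℝ) ^ 2)⁻¹ * ∑ j ∈ Finset.range N, M j := by
  set G := (Ioo (0:ℝ) 1).indicator g with hG_def
  have hG : Integrable G := hg.integrable_indicator measurableSet_Ioo
  have hG_supp : ∀ x ∉ Ioo (0:ℝ) 1, G x = 0 := fun x hx => indicator_of_notMem hx g
  have hsupp_Ico : ∀ {u : ℝ → ℝ}, (∀ x ∉ Ioo (0:ℝ) 1, u x = 0) → ∀ x ∉ Ico (0:ℝ) 1, u x = 0 :=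
    fun h x hx => h x fun hx' => hx (Ioo_subset_Ico_self hx')
  have hG1 : ∫ x, G x = 1 := by rw [integral_indicator measurableSet_Ioo, hg1]
  have hfG : ∫ x, |f x - G x| = ∫ t in Ioo (0:ℝ) 1, |f t - g t| := by
    rw [← setIntegral_eq_integral_of_forall_compl_eq_zero fun x hx => by
      simp [hf_supp x hx, hG_supp x hx]]
    exact setIntegral_congr_fun measurableSet_Ioo fun x hx => by simp [G, indicator_of_mem hx]
  have hK : ∀ j < N, ∀ a ∈ Ioo ((j:ℝ) / N) ((j + 1) / N), ∀ b ∈ Ioo ((j:ℝ) / N) ((j + 1) / N),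
      |G a - G b| ≤ M j * |a - b| := by
    intro j hj a ha b hb
    have hsub := Ioo_div_subset_Ioo hj
    rw [hG_def, indicator_of_mem (hsub ha), indicator_of_mem (hsub hb)]
    exact (convex_Ioo _ _).norm_image_sub_le_of_norm_hasDerivWithin_le
      (fun x hx => (hderiv x (hsub hx)).hasDerivWithinAt) (hM j hj) hb ha
  have hsplit := integral_abs_fractMulTransfer_sub_le hN hf hG (hsupp_Ico hf_supp)
    (hsupp_Ico hG_supp) 1
  have hsmooth := integral_abs_fractMulTransfer_sub_integral_le hN hG (hsupp_Ico hG_supp) hK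
  rw [hG1] at hsmooth
  rw [hfG] at hsplit
  have := dTV_map_fract_mul_withDensity_le hN hf hf0 (hsupp_Ico hf_supp) hf1
  linarith

lemma iterate_T_apply (q : ℕ) {n : ℕ} (hn : 1 ≤ n) (x : ℝ) :
    (T q)^[n] x = Int.fract ((q : ℝ) ^ n * x) := by
  induction n, hn using Nat.le_induction with
  | base => simp [T]
  | succ n _ ih =>
    rw [Function.iterate_succ_apply', ih, T, Int.fract_eq_fract]
    exact ⟨-((q : ℤ) * ⌊(q : ℝ) ^ n * x⌋), by rw [Int.fract]; push_cast; ring⟩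

lemma map_iterate_T {Ω : Type*} [MeasurableSpace Ω] {ℙ : Measure Ω} {X : Ω → ℝ}
    (hX : Measurable X) (q : ℕ) {n : ℕ} (hn : 1 ≤ n) :
    ℙ.map (fun ω => (T q)^[n] (X ω)) = (ℙ.map X).map fun x => Int.fract ((q : ℝ) ^ n * x) := by
  have hφ : Measurable fun x : ℝ => Int.fract ((q : ℝ) ^ n * x) :=
    (measurable_id.const_mul _).fract
  rw [Measure.map_map hφ hX]
  simp only [Function.comp_def, iterate_T_apply q hn]

lemma sum_sSup_abs_image_Ioo_le {g' : ℝ → ℝ} (hbdd : BddAbove ((fun x => |g' x|) '' Ioo (0:ℝ) 1))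
    (N : ℕ) :
    ∑ j ∈ Finset.range N, sSup ((fun y => |g' y|) '' Ioo ((j:ℝ) / N) ((j + 1) / N))
      ≤ N * sSup ((fun y => |g' y|) '' Ioo (0:ℝ) 1) := by
  have hle : ∀ j ∈ Finset.range N, sSup ((fun y => |g' y|) '' Ioo ((j:ℝ) / N) ((j + 1) / N))
      ≤ sSup ((fun y => |g' y|) '' Ioo (0:ℝ) 1) := fun j hj => by
    have hN : (0:ℝ) < N := Nat.cast_pos.mpr (Nat.zero_lt_of_lt (Finset.mem_range.mp hj))
    exact csSup_le_csSup hbdd ((nonempty_Ioo.mpr (by gcongr; linarith)).image _)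
      (image_mono (Ioo_div_subset_Ioo (Finset.mem_range.mp hj)))
  simpa using Finset.sum_le_sum hle

theorem stmt12_general
    {Ω : Type*} [MeasurableSpace Ω] (ℙ : Measure Ω) [IsProbabilityMeasure ℙ]
    (q : ℕ) (hq : 2 ≤ q)
    (f : ℝ → ℝ) (hf_meas : Measurable f) (hf_nonneg : ∀ x, 0 ≤ f x)
    (hf_supp : ∀ x, x ∉ Set.Ioo (0:ℝ) 1 → f x = 0)
    (X : Ω → ℝ) (hX : Measurable X)
    (hlaw : Measure.map X ℙ = volume.withDensity (fun x => ENNReal.ofReal (f x)))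
    (g g' : ℝ → ℝ)
    (hderiv : ∀ x ∈ Set.Ioo (0:ℝ) 1, HasDerivAt g (g' x) x)
    (hgint : ∫ t in Set.Ioo (0:ℝ) 1, g t = 1)
    -- `‖g′‖_∞ < ∞`
    (hbdd : BddAbove ((fun x => |g' x|) '' Set.Ioo (0:ℝ) 1))
    (n : ℕ) (hn : 1 ≤ n) :
    dTV (Measure.map (fun ω => (T q)^[n] (X ω)) ℙ) (volume.restrict (Set.Ico (0:ℝ) 1))
      ≤ (1 / 2) * (∫ t in Set.Ioo (0:ℝ) 1, |f t - g t|)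
          + (1 / 6) * (q : ℝ) ^ (-(2 * n : ℤ)) *
              ∑ j ∈ Finset.range (q ^ n),
                sSup ((fun y => |g' y|) ''
                  Set.Ioo ((j : ℝ) / (q : ℝ) ^ n) (((j : ℝ) + 1) / (q : ℝ) ^ n))
    ∧ (1 / 2) * (∫ t in Set.Ioo (0:ℝ) 1, |f t - g t|)
          + (1 / 6) * (q : ℝ) ^ (-(2 * n : ℤ)) *
              ∑ j ∈ Finset.range (q ^ n),
                sSup ((fun y => |g' y|) ''
                  Set.Ioo ((j : ℝ) / (q : ℝ) ^ n) (((j : ℝ) + 1) / (q : ℝ) ^ n))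
        ≤ (1 / 2) * (∫ t in Set.Ioo (0:ℝ) 1, |f t - g t|)
            + (1 / 6) * (q : ℝ) ^ (-(n : ℤ)) *
                sSup ((fun y => |g' y|) '' Set.Ioo (0:ℝ) 1) := by
  have hN : 0 < q ^ n := pow_pos (by omega) n
  have : IsProbabilityMeasure (volume.withDensity fun x => ENNReal.ofReal (f x)) :=
    hlaw ▸ Measure.isProbabilityMeasure_map hX.aemeasurable
  obtain ⟨hf, hf1⟩ := integrable_and_integral_eq_one_of_isProbabilityMeasure_withDensity
    (μ := volume) hf_meas.aestronglyMeasurable hf_nonneg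
  -- a non-integrable `g` would have the junk integral `0`
  have hg : IntegrableOn g (Ioo 0 1) := by
    by_contra h
    rw [integral_undef h] at hgint
    norm_num at hgint
  have hM : ∀ j < q ^ n, ∀ x ∈ Ioo ((j:ℝ) / (q ^ n : ℕ)) ((j + 1) / (q ^ n : ℕ)),
      |g' x| ≤ sSup ((fun y => |g' y|) '' Ioo ((j:ℝ) / (q ^ n : ℕ)) ((j + 1) / (q ^ n : ℕ))) :=
    fun j hj x hx => le_csSup (hbdd.mono (image_mono (Ioo_div_subset_Ioo hj))) ⟨x, hx, rfl⟩
  have hmain := dTV_map_fract_mul_withDensity_le_of_hasDerivAt hN hf hf_nonneg hf_supp hf1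
    hderiv hg hgint hM
  have hsum := sum_sSup_abs_image_Ioo_le hbdd (q ^ n)
  push_cast at hmain hsum
  have hpow2 : (q : ℝ) ^ (-(2 * n : ℤ)) = (((q : ℝ) ^ n) ^ 2)⁻¹ := by
    rw [zpow_neg, ← pow_mul, mul_comm]; norm_cast
  rw [map_iterate_T hX q hn, hlaw, hpow2, zpow_neg, zpow_natCast]
  refine ⟨hmain, add_le_add_right ?_ _⟩
  calc _ ≤ 1 / 6 * (((q : ℝ) ^ n) ^ 2)⁻¹ * ((q : ℝ) ^ n * sSup ((fun y => |g' y|) '' Ioo 0 1)) := by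
        gcongr
    _ = _ := by field_simp

theorem stmt12
    {Ω : Type*} [MeasurableSpace Ω] (ℙ : Measure Ω) [IsProbabilityMeasure ℙ]
    (q : ℕ) (hq : 2 ≤ q)
    (f : ℝ → ℝ) (hf_meas : Measurable f) (hf_nonneg : ∀ x, 0 ≤ f x)
    (hf_supp : ∀ x, x ∉ Set.Ioo (0:ℝ) 1 → f x = 0)
    (X : Ω → ℝ) (hX : Measurable X) (hXrange : ∀ ω, X ω ∈ Set.Ico (0:ℝ) 1)
    (hlaw : Measure.map X ℙ = volume.withDensity (fun x => ENNReal.ofReal (f x)))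
    (g g' : ℝ → ℝ)
    (hderiv : ∀ x ∈ Set.Ioo (0:ℝ) 1, HasDerivAt g (g' x) x)
    (hgint : ∫ t in Set.Ioo (0:ℝ) 1, g t = 1)
    -- `‖g′‖_∞ < ∞`
    (hbdd : BddAbove ((fun x => |g' x|) '' Set.Ioo (0:ℝ) 1))
    (n : ℕ) (hn : 1 ≤ n) :
    dTV (Measure.map (fun ω => (T q)^[n] (X ω)) ℙ) (volume.restrict (Set.Ico (0:ℝ) 1))
      ≤ (1 / 2) * (∫ t in Set.Ioo (0:ℝ) 1, |f t - g t|)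
          + (1 / 6) * (q : ℝ) ^ (-(2 * n : ℤ)) *
              ∑ j ∈ Finset.range (q ^ n),
                sSup ((fun y => |g' y|) ''
                  Set.Ioo ((j : ℝ) / (q : ℝ) ^ n) (((j : ℝ) + 1) / (q : ℝ) ^ n))
    ∧ (1 / 2) * (∫ t in Set.Ioo (0:ℝ) 1, |f t - g t|)
          + (1 / 6) * (q : ℝ) ^ (-(2 * n : ℤ)) *
              ∑ j ∈ Finset.range (q ^ n),
                sSup ((fun y => |g' y|) ''
                  Set.Ioo ((j : ℝ) / (q : ℝ) ^ n) (((j : ℝ) + 1) / (q : ℝ) ^ n))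
        ≤ (1 / 2) * (∫ t in Set.Ioo (0:ℝ) 1, |f t - g t|)
            + (1 / 6) * (q : ℝ) ^ (-(n : ℤ)) *
                sSup ((fun y => |g' y|) '' Set.Ioo (0:ℝ) 1) :=
  stmt12_general ℙ q hq f hf_meas hf_nonneg hf_supp X hX hlaw g g' hderiv hgint hbdd n hn
end
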